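/- arXiv:2510.01065 — 12 statements merged into one kernel-verified Lean document; each statement's English description precedes it below -/
import Mathlib

section
/- Let G be a torsion-free abelian group and let A, B, C be finite nonempty multisets with elements in G, where the sum A + C denotes the multiset of all pairwise sums a + c with multiplicities. If A + C = B + C, then A = B. -/
/-!
Sending a multiset to the element of `ℕ[G]` whose coefficients are its multiplicities is injective
and turns `pSum` into multiplication, so the claim is cancellation of the nonzero factor `C` in
`ℕ[G]`. This holds as soon as `G` has unique sums, since `ℕ[G]` then has no zero divisors. It
suffices to work in the subgroup generated by the finitely many elements of `A`, `B`, `C`, which is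
a finitely generated torsion-free abelian group, hence a subgroup of some `ℤⁿ`, which has unique sums.
-/

/-- Pairwise sum of multisets over an additive group. -/
def pSum {G : Type*} [AddCommGroup G] (A B : Multiset G) : Multiset G :=
  (A.product B).map fun p => p.1 + p.2

open AddMonoidAlgebra

section

variable {G : Type*} [AddCommGroup G]

theorem pSum_cons_left (a : G) (A C : Multiset G) :
    pSum (a ::ₘ A) C = C.map (a + ·) + pSum A C := by
  simp only [pSum, Multiset.product, Multiset.cons_bind, Multiset.map_add, Multiset.map_map]
  rfl

theorem pSum_map {H : Type*} [AddCommGroup H] (f : H →+ G) (A C : Multiset H) :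
    pSum (A.map f) (C.map f) = (pSum A C).map f := by
  induction A using Multiset.induction_on with
  | empty => rfl
  | cons a A ih => simp [pSum_cons_left, ih, Multiset.map_map]

noncomputable def Multiset.toAddMonoidAlgebra (s : Multiset G) : ℕ[G] :=
  (s.map (single · 1)).sum

@[simp]
theorem Multiset.toAddMonoidAlgebra_zero : (0 : Multiset G).toAddMonoidAlgebra = 0 := rfl

@[simp]
theorem Multiset.toAddMonoidAlgebra_cons (a : G) (s : Multiset G) :
    (a ::ₘ s).toAddMonoidAlgebra = single a 1 + s.toAddMonoidAlgebra := by
  simp [toAddMonoidAlgebra]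

@[simp]
theorem Multiset.toAddMonoidAlgebra_add (s t : Multiset G) :
    (s + t).toAddMonoidAlgebra = s.toAddMonoidAlgebra + t.toAddMonoidAlgebra := by
  simp [toAddMonoidAlgebra]

theorem Multiset.coeff_toAddMonoidAlgebra [DecidableEq G] (s : Multiset G) :
    s.toAddMonoidAlgebra.coeff = Multiset.toFinsupp s := by
  induction s using Multiset.induction_on with
  | empty => rfl
  | cons a s ih =>
    rw [toAddMonoidAlgebra_cons, coeff_add, coeff_single, ih, ← Multiset.singleton_add,
      Multiset.toFinsupp_add, Multiset.toFinsupp_singleton]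

theorem Multiset.toAddMonoidAlgebra_injective :
    Function.Injective (Multiset.toAddMonoidAlgebra (G := G)) := by
  classical
  intro s t h
  simpa [coeff_toAddMonoidAlgebra] using congrArg coeff h

theorem Multiset.toAddMonoidAlgebra_map_add_left (a : G) (s : Multiset G) :
    (s.map (a + ·)).toAddMonoidAlgebra = single a 1 * s.toAddMonoidAlgebra := by
  induction s using Multiset.induction_on with
  | empty => simp
  | cons b s ih => simp [ih, mul_add, single_mul_single]

theorem Multiset.toAddMonoidAlgebra_pSum (A C : Multiset G) :
    (pSum A C).toAddMonoidAlgebra = A.toAddMonoidAlgebra * C.toAddMonoidAlgebra := by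
  induction A using Multiset.induction_on with
  | empty => rfl
  | cons a A ih => simp [pSum_cons_left, ih, add_mul, toAddMonoidAlgebra_map_add_left]

theorem pSum_right_cancel_of_uniqueSums [UniqueSums G] {A B C : Multiset G} (hC : C ≠ 0)
    (h : pSum A C = pSum B C) : A = B := by
  have hC' : C.toAddMonoidAlgebra ≠ 0 := fun h0 =>
    hC (Multiset.toAddMonoidAlgebra_injective (h0.trans Multiset.toAddMonoidAlgebra_zero.symm))
  apply Multiset.toAddMonoidAlgebra_injective
  apply mul_right_cancel₀ hC'
  rw [← Multiset.toAddMonoidAlgebra_pSum, ← Multiset.toAddMonoidAlgebra_pSum, h]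

theorem pSum_right_cancel_of_subgroup (H : AddSubgroup G) [UniqueSums H] {A B C : Multiset G}
    (hA : ∀ x ∈ A, x ∈ H) (hB : ∀ x ∈ B, x ∈ H) (hC : ∀ x ∈ C, x ∈ H) (hC₀ : C ≠ 0)
    (h : pSum A C = pSum B C) : A = B := by
  lift A to Multiset H using hA
  lift B to Multiset H using hB
  lift C to Multiset H using hC
  have hC₀ : C ≠ 0 := mt Multiset.map_eq_zero.mpr hC₀
  have h : pSum A C = pSum B C := Multiset.map_injective H.subtype_injective <| by
    rwa [← pSum_map, ← pSum_map]
  rw [pSum_right_cancel_of_uniqueSums hC₀ h]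

theorem pSum_right_cancel [IsAddTorsionFree G] {A B C : Multiset G} (hC : C ≠ 0)
    (h : pSum A C = pSum B C) : A = B := by
  classical
  -- `UniqueSums H` is found through `AffineAddMonoid.to_twoUniqueSums`.
  let H := AddSubgroup.closure ((A + B + C).toFinset : Set G)
  have mem_H : ∀ x ∈ A + B + C, x ∈ H := fun x hx =>
    AddSubgroup.subset_closure (Multiset.mem_toFinset.2 hx)
  exact pSum_right_cancel_of_subgroup H (fun x hx => mem_H x (by simp [hx]))
    (fun x hx => mem_H x (by simp [hx])) (fun x hx => mem_H x (by simp [hx])) hC h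

end

theorem multiset_cancellation_general {G : Type*} [AddCommGroup G]
    (hG : ∀ g : G, g ≠ 0 → ¬IsOfFinAddOrder g)
    (A B C : Multiset G) (hC : C ≠ 0)
    (h : pSum A C = pSum B C) : A = B :=
  have : IsAddTorsionFree G := isAddTorsionFree_iff_not_isOfFinAddOrder.2 hG
  pSum_right_cancel hC h

theorem multiset_cancellation {G : Type*} [AddCommGroup G]
    (hG : ∀ g : G, g ≠ 0 → ¬IsOfFinAddOrder g)
    (A B C : Multiset G) (hA : A ≠ 0) (hB : B ≠ 0) (hC : C ≠ 0)
    (h : pSum A C = pSum B C) : A = B :=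
  multiset_cancellation_general hG A B C hC h
end

section
/- Let G be a torsion-free abelian group and let A, B be finite nonempty multisets with elements in G. If A + A = B + B (pairwise-sum multisets), then A = B. -/
theorem pSum_cons {G : Type*} [AddCommGroup G] (a : G) (A B : Multiset G) :
    pSum (a ::ₘ A) B = B.map (a + ·) + pSum A B := by
  simp [pSum, Multiset.product]

open AddMonoidAlgebra

instance IsAddTorsionFree.to_uniqueSums {G : Type*} [AddCommGroup G] [IsAddTorsionFree G] :
    UniqueSums G where
  uniqueAdd_of_nonempty {A B} hA hB := by
    classical
    let H := AddSubgroup.closure ((A ∪ B : Finset G) : Set G)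
    let ι : H ↪ G := Function.Embedding.subtype (· ∈ H)
    have hAH : (A.subtype (· ∈ H)).map ι = A := Finset.subtype_map_of_mem fun _ hx =>
      AddSubgroup.subset_closure (Finset.mem_union_left B hx)
    have hBH : (B.subtype (· ∈ H)).map ι = B := Finset.subtype_map_of_mem fun _ hx =>
      AddSubgroup.subset_closure (Finset.mem_union_right A hx)
    rw [← hAH, Finset.map_nonempty] at hA
    rw [← hBH, Finset.map_nonempty] at hB
    obtain ⟨a, ha, b, hb, hab⟩ := UniqueSums.uniqueAdd_of_nonempty hA hB
    rw [← hAH, ← hBH]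
    exact ⟨ι a, Finset.mem_map_of_mem ι ha, ι b, Finset.mem_map_of_mem ι hb,
      (UniqueAdd.addHom_map_iff ι fun _ _ => rfl).2 hab⟩

namespace Multiset

variable {G R : Type*} [Semiring R]

variable (R) in
noncomputable def toAddMonoidAlgebra_s1 (A : Multiset G) : R[G] :=
  (A.map fun a => single a 1).sum

@[simp]
theorem toAddMonoidAlgebra_zero_s1 : (0 : Multiset G).toAddMonoidAlgebra_s1 R = 0 := by
  simp [toAddMonoidAlgebra_s1]

@[simp]
theorem toAddMonoidAlgebra_cons_s1 (a : G) (A : Multiset G) :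
    (a ::ₘ A).toAddMonoidAlgebra_s1 R = single a 1 + A.toAddMonoidAlgebra_s1 R := by
  simp [toAddMonoidAlgebra_s1]

@[simp]
theorem toAddMonoidAlgebra_add_s1 (A B : Multiset G) :
    (A + B).toAddMonoidAlgebra_s1 R = A.toAddMonoidAlgebra_s1 R + B.toAddMonoidAlgebra_s1 R := by
  simp [toAddMonoidAlgebra_s1]

@[simp]
theorem coeff_toAddMonoidAlgebra_s1 [DecidableEq G] (A : Multiset G) (g : G) :
    (A.toAddMonoidAlgebra_s1 R).coeff g = A.count g := by
  induction A using Multiset.induction with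
  | empty => simp
  | cons a A ih => simp [ih, count_cons, Finsupp.single_apply, eq_comm, add_comm]

theorem toAddMonoidAlgebra_injective_s1 [CharZero R] :
    Function.Injective (toAddMonoidAlgebra_s1 (G := G) R) := fun A B h => by
  classical
  exact ext.2 fun g => by simpa using congr(($h).coeff g)

theorem toAddMonoidAlgebra_eq_zero [CharZero R] {A : Multiset G} :
    A.toAddMonoidAlgebra_s1 R = 0 ↔ A = 0 := by
  rw [← toAddMonoidAlgebra_zero_s1, toAddMonoidAlgebra_injective_s1.eq_iff]

section AddCommGroup

variable [AddCommGroup G]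

theorem toAddMonoidAlgebra_map_add_left_s1 (a : G) (B : Multiset G) :
    (B.map (a + ·)).toAddMonoidAlgebra_s1 R = single a 1 * B.toAddMonoidAlgebra_s1 R := by
  simp only [toAddMonoidAlgebra_s1, map_map, ← sum_map_mul_left, Function.comp_def,
    single_mul_single, mul_one]

theorem toAddMonoidAlgebra_pSum_s1 (A B : Multiset G) :
    (pSum A B).toAddMonoidAlgebra_s1 R = A.toAddMonoidAlgebra_s1 R * B.toAddMonoidAlgebra_s1 R := by
  induction A using Multiset.induction with
  | empty => rfl
  | cons a A ih =>
    rw [pSum_cons, toAddMonoidAlgebra_add_s1, ih, toAddMonoidAlgebra_cons_s1, add_mul,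
      toAddMonoidAlgebra_map_add_left_s1]

end AddCommGroup

end Multiset

theorem multiset_halving_general {G : Type*} [AddCommGroup G]
    (hG : ∀ g : G, g ≠ 0 → ¬IsOfFinAddOrder g)
    (A B : Multiset G)
    (h : pSum A A = pSum B B) : A = B := by
  have : IsAddTorsionFree G := isAddTorsionFree_iff_not_isOfFinAddOrder.mpr hG
  have hsq : A.toAddMonoidAlgebra_s1 ℤ ^ 2 = B.toAddMonoidAlgebra_s1 ℤ ^ 2 := by
    rw [sq, sq, ← Multiset.toAddMonoidAlgebra_pSum_s1, ← Multiset.toAddMonoidAlgebra_pSum_s1, h]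
  rcases sq_eq_sq_iff_eq_or_eq_neg.1 hsq with hAB | hAB
  · exact Multiset.toAddMonoidAlgebra_injective_s1 hAB
  · have hsum : (A + B).toAddMonoidAlgebra_s1 ℤ = 0 := by
      rw [Multiset.toAddMonoidAlgebra_add_s1, hAB, neg_add_cancel]
    obtain ⟨rfl, rfl⟩ := add_eq_zero.1 (Multiset.toAddMonoidAlgebra_eq_zero.1 hsum)
    rfl

theorem multiset_halving {G : Type*} [AddCommGroup G]
    (hG : ∀ g : G, g ≠ 0 → ¬IsOfFinAddOrder g)
    (A B : Multiset G) (hA : A ≠ 0) (hB : B ≠ 0)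
    (h : pSum A A = pSum B B) : A = B :=
  multiset_halving_general hG A B h
end

section
/- Let G be a torsion-free abelian group, n a positive integer, and A, B finite nonempty multisets with elements in G. If nA = nB, where nX denotes the n-fold pairwise-sum X + X + ... + X, then A = B. -/
/-- `nSum n A` is the `n`-fold pairwise sum `A + A + ⋯ + A` (with `nSum 0 A = {0}`). -/
def nSum {G : Type*} [AddCommGroup G] : ℕ → Multiset G → Multiset G
  | 0, _ => {0}
  | n + 1, A => pSum A (nSum n A)

open AddMonoidAlgebra

instance IsAddTorsionFree.to_twoUniqueSums {G : Type*} [AddCommGroup G] [IsAddTorsionFree G] :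
    TwoUniqueSums G :=
  .of_injective_addHom (DivisibleHull.coeAddMonoidHom G).toAddHom DivisibleHull.coe_injective
    inferInstance

theorem eq_of_pow_eq_pow_of_map_pos {R S : Type*} [CommRing R] [NoZeroDivisors R]
    [CommSemiring S] [PartialOrder S] [IsStrictOrderedRing S] (f : R →+* S) {x y : R}
    (hx : 0 < f x) (hy : 0 < f y) {n : ℕ} (hn : n ≠ 0) (h : x ^ n = y ^ n) : x = y := by
  have hgeom_ne : ∑ i ∈ Finset.range n, x ^ i * y ^ (n - 1 - i) ≠ 0 := by
    intro h0
    have hpos : 0 < ∑ i ∈ Finset.range n, f x ^ i * f y ^ (n - 1 - i) :=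
      Finset.sum_pos (fun i _ => mul_pos (pow_pos hx i) (pow_pos hy _))
        (Finset.nonempty_range_iff.2 hn)
    rw [← RingHom.map_geom_sum₂, h0, map_zero] at hpos
    exact hpos.false
  have hgeom := geom_sum₂_mul x y n
  rw [h, sub_self] at hgeom
  exact sub_eq_zero.1 ((mul_eq_zero.1 hgeom).resolve_left hgeom_ne)

noncomputable def ofMultiset (R : Type*) {G : Type*} [Semiring R] (A : Multiset G) : R[G] :=
  (A.map fun a => single a 1).sum

section Semiring

variable {R G : Type*} [Semiring R]

theorem coeff_ofMultiset [DecidableEq G] (A : Multiset G) (g : G) :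
    (ofMultiset R A).coeff g = A.count g := by
  induction A using Multiset.induction_on with
  | empty => simp [ofMultiset]
  | cons a A ih =>
    rw [ofMultiset, Multiset.map_cons, Multiset.sum_cons, coeff_add, Finsupp.add_apply,
      ← ofMultiset, ih, coeff_single, Finsupp.single_apply]
    by_cases hag : a = g
    · subst hag
      rw [if_pos rfl, Multiset.count_cons_self, Nat.cast_succ, add_comm]
    · rw [if_neg hag, Multiset.count_cons_of_ne (Ne.symm hag), zero_add]

theorem ofMultiset_injective [CharZero R] :
    Function.Injective (ofMultiset R : Multiset G → R[G]) := by
  classical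
  intro A B h
  ext g
  have hcoeff := congrArg (fun x : R[G] => x.coeff g) h
  simp only [coeff_ofMultiset] at hcoeff
  exact_mod_cast hcoeff

variable [AddCommGroup G]

theorem ofMultiset_pSum (A B : Multiset G) :
    ofMultiset R (pSum A B) = ofMultiset R A * ofMultiset R B := by
  rw [ofMultiset, ofMultiset, ← Multiset.sum_map_mul_right]
  simp only [pSum, Multiset.product, Multiset.map_bind, Multiset.sum_bind, ofMultiset,
    ← Multiset.sum_map_mul_left, Multiset.map_map, Function.comp_def, single_mul_single, mul_one]

theorem ofMultiset_nSum (n : ℕ) (A : Multiset G) :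
    ofMultiset R (nSum n A) = ofMultiset R A ^ n := by
  induction n with
  | zero => simp [ofMultiset, nSum, one_def]
  | succ n ih => rw [nSum, ofMultiset_pSum, ih, pow_succ']

end Semiring

theorem lift_one_ofMultiset {R G : Type*} [CommSemiring R] [AddMonoid G] (A : Multiset G) :
    lift R R G 1 (ofMultiset R A) = A.card := by
  simp [ofMultiset, map_multiset_sum]

theorem multiset_div_by_n {G : Type*} [AddCommGroup G]
    (hG : ∀ g : G, g ≠ 0 → ¬IsOfFinAddOrder g)
    (n : ℕ) (hn : 0 < n)
    (A B : Multiset G) (hA : A ≠ 0) (hB : B ≠ 0)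
    (h : nSum n A = nSum n B) : A = B := by
  have : IsAddTorsionFree G := .of_not_isOfFinAddOrder hG
  have augmentation_pos {C : Multiset G} (hC : C ≠ 0) :
      0 < lift ℤ ℤ G 1 (ofMultiset ℤ C) := by
    rw [lift_one_ofMultiset]
    exact_mod_cast Multiset.card_pos.2 hC
  refine ofMultiset_injective (R := ℤ) <| eq_of_pow_eq_pow_of_map_pos (lift ℤ ℤ G 1).toRingHom
    (augmentation_pos hA) (augmentation_pos hB) hn.ne' ?_
  rw [← ofMultiset_nSum, ← ofMultiset_nSum, h]
end

section
/- Let H be a subgroup of an abelian group G, and let A, B be finite nonempty multisets whose elements all lie in H. If there exists a finite nonempty multiset C over G with A + C = B + C (pairwise-sum multisets), then there exists a finite nonempty multiset C' over H with A + C' = B + C'. -/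
lemma pSum_cons_right {G : Type*} [AddCommGroup G] (A C : Multiset G) (c : G) :
    pSum A (c ::ₘ C) = A.map (· + c) + pSum A C := by
  simp only [pSum, Multiset.product, Multiset.map_cons, Multiset.map_bind]
  rw [show (fun a : G => (a + c) ::ₘ Multiset.map (fun x : G × G => x.1 + x.2)
        (Multiset.map (Prod.mk a) C)) = fun a =>
      ({a + c} : Multiset G) + Multiset.map (fun x : G × G => x.1 + x.2)
        (Multiset.map (Prod.mk a) C) by funext a; simp]
  rw [Multiset.bind_add]
  congr 1
  simp [Multiset.bind_singleton]

lemma pSum_filter {G : Type*} [AddCommGroup G] (H : AddSubgroup G)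
    (A : Multiset G) (hAH : ∀ x ∈ A, x ∈ H) (C : Multiset G) (t : G ⧸ H)
    [DecidablePred fun x : G => (QuotientAddGroup.mk x : G ⧸ H) = t] :
    (pSum A C).filter (fun x => (QuotientAddGroup.mk x : G ⧸ H) = t)
      = pSum A (C.filter fun c => (QuotientAddGroup.mk c : G ⧸ H) = t) := by
  induction C using Multiset.induction with
  | empty => simp [pSum, Multiset.product]
  | cons c C ih =>
    rw [pSum_cons_right, Multiset.filter_add, ih, Multiset.filter_cons]
    have hmk : ∀ x ∈ A.map (· + c), (QuotientAddGroup.mk x : G ⧸ H) = QuotientAddGroup.mk c := by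
      intro x hx
      obtain ⟨a, ha, rfl⟩ := Multiset.mem_map.mp hx
      have : -(a + c) + c ∈ H := by
        have := hAH a ha
        have : -(a + c) + c = -a := by abel
        rw [this]; exact neg_mem (hAH a ha)
      exact (QuotientAddGroup.eq ..).mpr this
    by_cases hc : (QuotientAddGroup.mk c : G ⧸ H) = t
    · rw [if_pos hc, Multiset.singleton_add, pSum_cons_right, Multiset.filter_eq_self.mpr]
      intro x hx; rw [hmk x hx]; exact hc
    · rw [if_neg hc, Multiset.filter_eq_nil.mpr, zero_add, zero_add]
      intro x hx; rw [hmk x hx]; exact hc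

lemma pSum_map_add_right {G : Type*} [AddCommGroup G] (A C : Multiset G) (g : G) :
    pSum A (C.map (· + g)) = (pSum A C).map (· + g) := by
  induction C using Multiset.induction with
  | empty => simp [pSum, Multiset.product]
  | cons c C ih =>
    rw [Multiset.map_cons, pSum_cons_right, pSum_cons_right, Multiset.map_add, ih]
    congr 1
    rw [Multiset.map_map]
    congr 1
    funext a; simp [add_assoc]

theorem catalysis_descends_to_subgroup {G : Type*} [AddCommGroup G] (H : AddSubgroup G)
    (A B : Multiset G) (hA : A ≠ 0) (hB : B ≠ 0)
    (hAH : ∀ x ∈ A, x ∈ H) (hBH : ∀ x ∈ B, x ∈ H)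
    (h : ∃ C : Multiset G, C ≠ 0 ∧ pSum A C = pSum B C) :
    ∃ C' : Multiset G, C' ≠ 0 ∧ (∀ x ∈ C', x ∈ H) ∧ pSum A C' = pSum B C' := by
  classical
  obtain ⟨C, hC, hAC⟩ := h
  obtain ⟨c₀, hc₀⟩ := Multiset.exists_mem_of_ne_zero hC
  set t : G ⧸ H := QuotientAddGroup.mk c₀ with ht
  set C₁ := C.filter (fun c => (QuotientAddGroup.mk c : G ⧸ H) = t) with hC₁
  have hmem : c₀ ∈ C₁ := Multiset.mem_filter.mpr ⟨hc₀, rfl⟩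
  have hEq : pSum A C₁ = pSum B C₁ := by
    rw [← pSum_filter H A hAH C t, ← pSum_filter H B hBH C t, hAC]
  refine ⟨C₁.map (· + (-c₀)), ?_, ?_, ?_⟩
  · intro h0
    rw [Multiset.map_eq_zero] at h0
    exact Multiset.notMem_zero c₀ (h0 ▸ hmem)
  · intro x hx
    obtain ⟨c, hc, rfl⟩ := Multiset.mem_map.mp hx
    have := (Multiset.mem_filter.mp hc).2
    have h1 : -c₀ + c ∈ H := (QuotientAddGroup.eq ..).mp this.symm
    have : c + -c₀ = -c₀ + c := add_comm _ _
    rw [this]; exact h1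
  · rw [pSum_map_add_right, pSum_map_add_right, hEq]
end

section
/- Let G = T × F be a finitely generated abelian group where T is a finite subgroup and F is torsion-free, and let π : G → F be the projection. For finite nonempty multisets A, B over G, if π(A) = π(B) (images as multisets), then A + T = B + T, where T is regarded as the multiset of its elements. In particular, A can be catalytically transformed to B with catalyst T. -/
section FibreSum

variable {T F : Type*} [AddCommGroup T] [Fintype T] [AddCommGroup F]

lemma univ_val_map_add_inl (p : T × F) :
    (Finset.univ.val : Multiset T).map (fun t => p + ((t, 0) : T × F)) =
      (Finset.univ.val : Multiset T).map fun t => (t, p.2) := by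
  calc (Finset.univ.val : Multiset T).map (fun t => p + ((t, 0) : T × F))
      = ((Finset.univ.val : Multiset T).map (Equiv.addLeft p.1)).map fun t => (t, p.2) := by
        rw [Multiset.map_map]
        exact Multiset.map_congr rfl fun t _ => by simp [Prod.ext_iff]
    _ = _ := by rw [Multiset.map_univ_val_equiv]

lemma pSum_univ_inl_eq_bind_fibre (A : Multiset (T × F)) :
    pSum A ((Finset.univ.val : Multiset T).map fun t => ((t, 0) : T × F)) =
      (A.map Prod.snd).bind fun f => (Finset.univ.val : Multiset T).map fun t => (t, f) := by
  rw [pSum, Multiset.product, Multiset.bind_map, Multiset.map_bind]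
  refine congrArg _ (funext fun p => ?_)
  rw [Multiset.map_map, Multiset.map_map]
  exact univ_val_map_add_inl p

end FibreSum

theorem equal_projections_imply_catalysis_general {T F : Type*}
    [AddCommGroup T] [Fintype T]
    [AddCommGroup F]
    (A B : Multiset (T × F))
    (h : A.map Prod.snd = B.map Prod.snd) :
    pSum A ((Finset.univ.val : Multiset T).map fun t => ((t, 0) : T × F)) =
      pSum B ((Finset.univ.val : Multiset T).map fun t => ((t, 0) : T × F)) := by
  rw [pSum_univ_inl_eq_bind_fibre, pSum_univ_inl_eq_bind_fibre, h]

theorem equal_projections_imply_catalysis {T F : Type*}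
    [AddCommGroup T] [Fintype T] [DecidableEq T]
    [AddCommGroup F] (hF : ∀ g : F, g ≠ 0 → ¬IsOfFinAddOrder g)
    (hfg : AddGroup.FG (T × F))
    (A B : Multiset (T × F)) (hA : A ≠ 0) (hB : B ≠ 0)
    (h : A.map Prod.snd = B.map Prod.snd) :
    pSum A ((Finset.univ.val : Multiset T).map fun t => ((t, 0) : T × F)) =
      pSum B ((Finset.univ.val : Multiset T).map fun t => ((t, 0) : T × F)) :=
  equal_projections_imply_catalysis_general A B h
end

section
/- Let X(x) = 4 + x, Y(x) = 2 + 2x − x² + 2x³ + 2x⁴, B(x) = 1 + x, A = BXY, C₀ = BX, C₁ = BY, D₀ = Y², D₁ = X². Then the polynomial identities A·C₀ = B·D₁·C₁ and A·C₁ = B·D₀·C₀ hold, and all of A, B, C₀, C₁, D₀, D₁ have nonnegative coefficients, while XY has a negative coefficient. -/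
open Polynomial

noncomputable def Xp : Polynomial ℤ := C 4 + X
noncomputable def Yp : Polynomial ℤ := C 2 + C 2 * X - X ^ 2 + C 2 * X ^ 3 + C 2 * X ^ 4
noncomputable def Bp : Polynomial ℤ := 1 + X
noncomputable def Ap : Polynomial ℤ := Bp * Xp * Yp
noncomputable def C0 : Polynomial ℤ := Bp * Xp
noncomputable def C1 : Polynomial ℤ := Bp * Yp
noncomputable def D0 : Polynomial ℤ := Yp ^ 2
noncomputable def D1 : Polynomial ℤ := Xp ^ 2

lemma hAp : Ap = C 8 + C 18 * X + C 8 * X ^ 2 + C 5 * X ^ 3 + C 17 * X ^ 4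
    + C 12 * X ^ 5 + C 2 * X ^ 6 := by
  simp only [Ap, Bp, Xp, Yp, map_ofNat]; ring

lemma hC0 : C0 = C 4 + C 5 * X + X ^ 2 := by
  simp only [C0, Bp, Xp, map_ofNat]; ring

lemma hC1 : C1 = C 2 + C 4 * X + X ^ 2 + X ^ 3 + C 4 * X ^ 4 + C 2 * X ^ 5 := by
  simp only [C1, Bp, Yp, map_ofNat]; ring

lemma hD0 : D0 = C 4 + C 8 * X + C 4 * X ^ 3 + C 17 * X ^ 4 + C 4 * X ^ 5
    + C 8 * X ^ 7 + C 4 * X ^ 8 := by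
  simp only [D0, Yp, map_ofNat]; ring

lemma hD1 : D1 = C 16 + C 8 * X + X ^ 2 := by
  simp only [D1, Xp, map_ofNat]; ring

lemma hXY : Xp * Yp = C 8 + C 10 * X - C 2 * X ^ 2 + C 7 * X ^ 3 + C 10 * X ^ 4
    + C 2 * X ^ 5 := by
  simp only [Xp, Yp, map_ofNat]; ring

theorem flexible_catalyst_polynomial_identities :
    Ap * C0 = Bp * D1 * C1 ∧
    Ap * C1 = Bp * D0 * C0 ∧
    (∀ k, 0 ≤ Ap.coeff k) ∧ (∀ k, 0 ≤ Bp.coeff k) ∧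
    (∀ k, 0 ≤ C0.coeff k) ∧ (∀ k, 0 ≤ C1.coeff k) ∧
    (∀ k, 0 ≤ D0.coeff k) ∧ (∀ k, 0 ≤ D1.coeff k) ∧
    (∃ k, (Xp * Yp).coeff k < 0) := by
  refine ⟨by simp only [Ap, C0, C1, D1]; ring,
          by simp only [Ap, C0, C1, D0]; ring, ?_, ?_, ?_, ?_, ?_, ?_, ?_⟩
  · intro k
    rw [hAp]
    simp only [coeff_add, coeff_C_mul, coeff_X_pow, coeff_C, coeff_X, mul_ite, mul_one, mul_zero]
    split_ifs <;> norm_num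
  · intro k
    simp only [Bp, coeff_add, coeff_one, coeff_X]
    split_ifs <;> norm_num
  · intro k
    rw [hC0]
    simp only [coeff_add, coeff_C_mul, coeff_X_pow, coeff_C, coeff_X, mul_ite, mul_one, mul_zero]
    split_ifs <;> norm_num
  · intro k
    rw [hC1]
    simp only [coeff_add, coeff_C_mul, coeff_X_pow, coeff_C, coeff_X, mul_ite, mul_one, mul_zero]
    split_ifs <;> norm_num
  · intro k
    rw [hD0]
    simp only [coeff_add, coeff_C_mul, coeff_X_pow, coeff_C, coeff_X, mul_ite, mul_one, mul_zero]
    split_ifs <;> norm_num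
  · intro k
    rw [hD1]
    simp only [coeff_add, coeff_C_mul, coeff_X_pow, coeff_C, coeff_X, mul_ite, mul_one, mul_zero]
    split_ifs <;> norm_num
  · refine ⟨2, ?_⟩
    rw [hXY]
    simp [coeff_add, coeff_sub, coeff_C_mul, coeff_X_pow, coeff_C, coeff_X]
end

section
/- For every integer n ≥ 2, there exists a polynomial p ∈ ℤ[x] such that pᵏ has a negative coefficient for all 1 ≤ k < n, pⁿ has all coefficients nonnegative, and (1+x)·p(x) has all coefficients nonnegative. Explicitly, p(x) = a₀ + a₁x − x² + a₀x³ + a₀x⁴ with a₁ = 5ⁿ and a₀ = ⌊(n−1)/2 · 5^{2n}⌋ works. -/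
/-!
Write `p = P - X ^ 2` with `P = a₀ + a₁ X + a₀ X ^ 3 + a₀ X ^ 4`, and let `c_M(d)` be the (nonnegative)
coefficients of `P ^ M`. The `X ^ 2`-coefficient of `p ^ k` is `k a₀ ^ (k - 2) ((k - 1) a₁ ^ 2 / 2 - a₀)`,
which is negative for `k < n` because `a₀ = ⌊(n - 1) a₁ ^ 2 / 2⌋`.

By the binomial theorem `[X ^ m] p ^ n = ∑ₖ (-1) ^ k tₖ` with `tₖ = C(n, k) c_{n-k}(m - 2k)`, and an
alternating sum of a nonincreasing nonnegative sequence is nonnegative. Since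
`C(n, k + 1) / C(n, k) = (n - k) / (k + 1)`, monotonicity of `tₖ` follows from
`n c_M(d) ≤ c_{M+1}(d + 2)` for `d ≥ 1`, proved by induction on `M` (multiply by `P`; it needs
`a₁ ≥ n` and `a₀ ^ 2 ≥ n ^ 2 a₁`), and at `d = 0` from `2 a₀ ≤ (n - 1) a₁ ^ 2`.
-/

open Polynomial Finset

namespace Negativity

lemma coeff_mul_nonneg {R : Type*} [Semiring R] [PartialOrder R] [IsOrderedRing R] {p q : R[X]}
    (hp : ∀ i, 0 ≤ p.coeff i) (hq : ∀ i, 0 ≤ q.coeff i) (d : ℕ) : 0 ≤ (p * q).coeff d := by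
  rw [coeff_mul]
  exact sum_nonneg fun x _ => mul_nonneg (hp _) (hq _)

lemma coeff_pow_nonneg {R : Type*} [Semiring R] [PartialOrder R] [IsOrderedRing R] {p : R[X]}
    (hp : ∀ i, 0 ≤ p.coeff i) (M d : ℕ) : 0 ≤ (p ^ M).coeff d := by
  induction M generalizing d with
  | zero => rw [pow_zero, coeff_one]; split_ifs <;> simp
  | succ M ih => rw [pow_succ]; exact coeff_mul_nonneg ih hp d

noncomputable def P (a b : ℤ) : ℤ[X] := C a + C b * X + C a * X ^ 3 + C a * X ^ 4

variable {a b : ℤ}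

lemma coeff_P (d : ℕ) :
    (P a b).coeff d = if d = 0 then a else if d = 1 then b else if d = 3 ∨ d = 4 then a else 0 := by
  simp only [P, coeff_add, coeff_C_mul, coeff_C, coeff_X, coeff_X_pow]
  split_ifs <;> omega

lemma coeff_P_nonneg (ha : 0 ≤ a) (hb : 0 ≤ b) (d : ℕ) : 0 ≤ (P a b).coeff d := by
  rw [coeff_P]
  split_ifs <;> first | assumption | rfl

@[simp] lemma coeff_P_zero : (P a b).coeff 0 = a := by simp [coeff_P]
@[simp] lemma coeff_P_one : (P a b).coeff 1 = b := by simp [coeff_P]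
@[simp] lemma coeff_P_two : (P a b).coeff 2 = 0 := by simp [coeff_P]
@[simp] lemma coeff_P_three : (P a b).coeff 3 = a := by simp [coeff_P]
@[simp] lemma coeff_P_four : (P a b).coeff 4 = a := by simp [coeff_P]
@[simp] lemma coeff_P_add_five (d : ℕ) : (P a b).coeff (d + 5) = 0 := by simp [coeff_P]

lemma coeff_P_pow_succ (M d : ℕ) :
    (P a b ^ (M + 1)).coeff d = a * (P a b ^ M).coeff d + b * (X ^ 1 * P a b ^ M).coeff d +
      a * (X ^ 3 * P a b ^ M).coeff d + a * (X ^ 4 * P a b ^ M).coeff d := by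
  rw [pow_succ', P]
  simp only [add_mul, mul_assoc, coeff_add, coeff_C_mul, pow_one]

lemma coeff_P_pow_succ_two (M : ℕ) :
    (P a b ^ (M + 1)).coeff 2 = a * (P a b ^ M).coeff 2 + b * (P a b ^ M).coeff 1 := by
  simp [coeff_P_pow_succ, coeff_X_pow_mul']

lemma coeff_P_pow_succ_three (M : ℕ) :
    (P a b ^ (M + 1)).coeff 3 =
      a * (P a b ^ M).coeff 3 + b * (P a b ^ M).coeff 2 + a * (P a b ^ M).coeff 0 := by
  simp [coeff_P_pow_succ, coeff_X_pow_mul']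

lemma coeff_P_pow_succ_add_four (M d : ℕ) :
    (P a b ^ (M + 1)).coeff (d + 4) = a * (P a b ^ M).coeff (d + 4) +
      b * (P a b ^ M).coeff (d + 3) + a * (P a b ^ M).coeff (d + 1) + a * (P a b ^ M).coeff d := by
  simp [coeff_P_pow_succ, coeff_X_pow_mul']

lemma coeff_P_pow_zero (M : ℕ) : (P a b ^ M).coeff 0 = a ^ M := by
  rw [coeff_zero_eq_eval_zero, eval_pow, ← coeff_zero_eq_eval_zero, coeff_P_zero]

lemma coeff_P_pow_succ_one (M : ℕ) : (P a b ^ (M + 1)).coeff 1 = (M + 1) * b * a ^ M := by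
  induction M with
  | zero => simp
  | succ M ih =>
    rw [coeff_P_pow_succ (M + 1)]
    simp [coeff_X_pow_mul', ih, coeff_P_pow_zero]
    ring

lemma two_mul_coeff_P_pow_two (M : ℕ) :
    2 * (P a b ^ (M + 2)).coeff 2 = (M + 2) * (M + 1) * b ^ 2 * a ^ M := by
  induction M with
  | zero => simp [coeff_P_pow_succ_two]; ring
  | succ M ih =>
    rw [coeff_P_pow_succ_two, coeff_P_pow_succ_one]
    push_cast
    linear_combination a * ih

lemma pow_le_coeff_P_pow_three (ha : 0 ≤ a) (hb : 0 ≤ b) (M : ℕ) :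
    a ^ (M + 1) ≤ (P a b ^ (M + 1)).coeff 3 := by
  induction M with
  | zero => simp
  | succ M ih =>
    have h2 := coeff_pow_nonneg (coeff_P_nonneg ha hb) (M + 1) 2
    rw [coeff_P_pow_succ_three, coeff_P_pow_zero, pow_succ']
    nlinarith [pow_nonneg ha (M + 1)]

variable {n M : ℕ}

lemma mul_coeff_one_le_mul_coeff_three (ha : 0 ≤ a) (hb : 0 ≤ b) (hM : n * M * b ≤ a ^ 2) :
    n * (P a b ^ M).coeff 1 ≤ a * (P a b ^ M).coeff 3 := by
  rcases M with _ | M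
  · simp [coeff_one]
  · rw [coeff_P_pow_succ_one]
    have h3 := pow_le_coeff_P_pow_three ha hb M
    push_cast at hM
    calc (n : ℤ) * ((M + 1) * b * a ^ M) = (n * (M + 1) * b) * a ^ M := by ring
      _ ≤ a ^ 2 * a ^ M := mul_le_mul_of_nonneg_right hM (pow_nonneg ha M)
      _ = a * a ^ (M + 1) := by ring
      _ ≤ a * (P a b ^ (M + 1)).coeff 3 := mul_le_mul_of_nonneg_left h3 ha

lemma mul_coeff_two_le_mul_coeff_one (ha : 0 ≤ a) (hb : 0 ≤ b) (hM : n * M * b ≤ a ^ 2) :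
    n * (P a b ^ M).coeff 2 ≤ a * (P a b ^ M).coeff 1 := by
  rcases M with _ | _ | M
  · simp [coeff_one]
  · simpa using mul_nonneg ha hb
  · have hc := coeff_pow_nonneg (coeff_P_nonneg ha hb) (M + 2) 2
    have hM' : (n : ℤ) * (M + 1) * b ≤ a ^ 2 := le_trans (by push_cast; nlinarith) hM
    rw [coeff_P_pow_succ_one]
    calc (n : ℤ) * (P a b ^ (M + 2)).coeff 2 ≤ n * (2 * (P a b ^ (M + 2)).coeff 2) := by nlinarith
      _ = (n * (M + 1) * b) * ((M + 2) * b * a ^ M) := by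
        rw [two_mul_coeff_P_pow_two]; ring
      _ ≤ a ^ 2 * ((M + 2) * b * a ^ M) := by gcongr
      _ = a * ((↑(M + 1) + 1) * b * a ^ (M + 1)) := by push_cast; ring

lemma mul_coeff_le_coeff_succ_add_two (ha : 0 ≤ a) (hb : 0 ≤ b) (hna : n ≤ a) (hnb : n ≤ b)
    (hM : n * M * b ≤ a ^ 2) (d : ℕ) (hd : 1 ≤ d) :
    n * (P a b ^ M).coeff d ≤ (P a b ^ (M + 1)).coeff (d + 2) := by
  have hc := coeff_pow_nonneg (coeff_P_nonneg ha hb)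
  induction M generalizing d with
  | zero =>
    rw [pow_zero, coeff_one, if_neg (by omega), mul_zero]
    exact hc _ _
  | succ M ih =>
    have hM' : (n : ℤ) * M * b ≤ a ^ 2 := le_trans (by push_cast; nlinarith) hM
    have ih := ih hM'
    obtain rfl | rfl | ⟨e, rfl⟩ : d = 1 ∨ d = 2 ∨ ∃ e, d = e + 3 := by
      rcases d with _ | _ | _ | e <;> simp_all
    · have hX := mul_coeff_one_le_mul_coeff_three ha hb hM
      rw [coeff_P_pow_succ_three]
      nlinarith [hc (M + 1) 2, hc (M + 1) 0]
    · have hY := mul_coeff_two_le_mul_coeff_one ha hb hM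
      rw [coeff_P_pow_succ_add_four _ 0]
      nlinarith [hc (M + 1) 4, hc (M + 1) 3, hc (M + 1) 0]
    rw [show e + 3 + 2 = (e + 1) + 4 by ring, coeff_P_pow_succ_add_four]
    -- `n c_M(0) ≤ c_{M+1}(2)` fails, so for `e = 0` the term `c_M(0)` is matched with `c_{M+1}(1)`,
    -- and for `e = 1` the terms `c_M(1), c_M(0)` with `a c_M(3), a c_M(0)` inside `c_{M+1}(3)`.
    rcases e with _ | _ | f
    · have h1 := mul_le_mul_of_nonneg_left (ih 3 (by omega)) ha
      have h2 := mul_le_mul_of_nonneg_left (ih 2 (by omega)) hb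
      have h3 : (n : ℤ) * a ^ M ≤ (M + 1) * b * a ^ M := by gcongr; nlinarith
      rw [coeff_P_pow_succ_three, coeff_P_pow_succ_one, coeff_P_pow_zero]
      simp only [zero_add, Nat.reduceAdd] at h1 h2 ⊢
      nlinarith [hc (M + 1) 2]
    · have h1 := mul_le_mul_of_nonneg_left (ih 4 (by omega)) ha
      have h2 := mul_le_mul_of_nonneg_left (ih 3 (by omega)) hb
      have h3 := mul_le_mul_of_nonneg_left (mul_coeff_one_le_mul_coeff_three ha hb hM') ha
      have h4 := mul_le_mul_of_nonneg_right hna (mul_nonneg ha (hc M 0))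
      have h5 := mul_nonneg (mul_nonneg ha hb) (hc M 2)
      have h6 := mul_nonneg ha (hc (M + 1) 2)
      rw [coeff_P_pow_succ_add_four _ 0, coeff_P_pow_succ_three]
      simp only [zero_add, Nat.reduceAdd] at h1 h2 ⊢
      linarith
    · have h1 := mul_le_mul_of_nonneg_left (ih (f + 5) (by omega)) ha
      have h2 := mul_le_mul_of_nonneg_left (ih (f + 4) (by omega)) hb
      have h3 := mul_le_mul_of_nonneg_left (ih (f + 2) (by omega)) ha
      have h4 := mul_le_mul_of_nonneg_left (ih (f + 1) (by omega)) ha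
      rw [coeff_P_pow_succ_add_four _ (f + 1)]
      linarith

lemma succ_mul_coeff_le (ha : 0 ≤ a) (hb : 0 ≤ b) (hna : n ≤ a) (hnb : n ≤ b)
    (hsq : n * n * b ≤ a ^ 2) (h2a : 2 * a ≤ (n - 1) * b ^ 2) {k d : ℕ} (hkM : k + M + 1 = n)
    (hMd : M ≠ 0 ∨ d ≠ 0) :
    (M + 1) * (P a b ^ M).coeff d ≤ (k + 1) * (P a b ^ (M + 1)).coeff (d + 2) := by
  have hc := coeff_pow_nonneg (coeff_P_nonneg ha hb)
  rcases Nat.eq_zero_or_pos d with rfl | hd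
  · obtain ⟨L, rfl⟩ : ∃ L, M = L + 1 := Nat.exists_eq_succ_of_ne_zero (by omega)
    have hkL : (n : ℤ) - 1 ≤ (k + 1) * (L + 1) := by
      rw [← hkM]; push_cast; nlinarith
    have h2 := two_mul_coeff_P_pow_two (a := a) (b := b) L
    have h2a' : 2 * a ≤ (k + 1) * (L + 1) * b ^ 2 :=
      h2a.trans (mul_le_mul_of_nonneg_right hkL (sq_nonneg b))
    rw [coeff_P_pow_zero]
    show _ ≤ _ * (P a b ^ (L + 2)).coeff 2
    have : 2 * (((L + 1 : ℕ) : ℤ) + 1) * a ^ (L + 1) ≤ 2 * ((k + 1) * (P a b ^ (L + 2)).coeff 2) :=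
      calc 2 * (((L + 1 : ℕ) : ℤ) + 1) * a ^ (L + 1) = ((L + 2) * a ^ L) * (2 * a) := by
            push_cast; ring
        _ ≤ ((L + 2) * a ^ L) * ((k + 1) * (L + 1) * b ^ 2) := by gcongr
        _ = 2 * ((k + 1) * (P a b ^ (L + 2)).coeff 2) := by linear_combination (-(k : ℤ) - 1) * h2
    linarith
  · have hnM : (M : ℤ) + 1 ≤ n := by rw [← hkM]; push_cast; linarith
    have hM : (n : ℤ) * M * b ≤ a ^ 2 := le_trans (by gcongr; linarith) hsq
    calc ((M : ℤ) + 1) * (P a b ^ M).coeff d ≤ n * (P a b ^ M).coeff d := by gcongr; exact hc _ _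
      _ ≤ (P a b ^ (M + 1)).coeff (d + 2) := mul_coeff_le_coeff_succ_add_two ha hb hna hnb hM d hd
      _ ≤ (k + 1) * (P a b ^ (M + 1)).coeff (d + 2) := le_mul_of_one_le_left (hc _ _) (by linarith)

lemma choose_mul_coeff_le (ha : 0 ≤ a) (hb : 0 ≤ b) (hna : n ≤ a) (hnb : n ≤ b)
    (hsq : n * n * b ≤ a ^ 2) (h2a : 2 * a ≤ (n - 1) * b ^ 2) {k m : ℕ} (hk : k + 1 ≤ n)
    (hkm : k + 1 ≠ n ∨ m ≠ 2 * n) :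
    (n.choose (k + 1) : ℤ) * (X ^ (2 * (k + 1)) * P a b ^ (n - (k + 1))).coeff m ≤
      n.choose k * (X ^ (2 * k) * P a b ^ (n - k)).coeff m := by
  have hc := coeff_pow_nonneg (coeff_P_nonneg ha hb)
  obtain ⟨M, hkM⟩ : ∃ M, k + M + 1 = n := ⟨n - (k + 1), by omega⟩
  rw [coeff_X_pow_mul', coeff_X_pow_mul']
  split_ifs with hm hm'
  · obtain ⟨d, rfl⟩ : ∃ d, m = 2 * (k + 1) + d := ⟨m - 2 * (k + 1), by omega⟩
    rw [show n - (k + 1) = M by omega, show n - k = M + 1 by omega,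
      show 2 * (k + 1) + d - 2 * (k + 1) = d by omega, show 2 * (k + 1) + d - 2 * k = d + 2 by omega]
    have hch : (n.choose (k + 1) : ℤ) * (k + 1) = n.choose k * (M + 1) := by
      rw [show (M : ℤ) + 1 = ((n - k : ℕ) : ℤ) by push_cast [Nat.cast_sub (by omega : k ≤ n)]; omega]
      exact_mod_cast Nat.choose_succ_right_eq n k
    have hkey := succ_mul_coeff_le ha hb hna hnb hsq h2a hkM (by omega : M ≠ 0 ∨ d ≠ 0)
    have hpos : (0 : ℤ) < k + 1 := by positivity
    refine le_of_mul_le_mul_left ?_ hpos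
    calc ((k : ℤ) + 1) * (n.choose (k + 1) * (P a b ^ M).coeff d)
        = n.choose k * ((M + 1) * (P a b ^ M).coeff d) := by linear_combination (P a b ^ M).coeff d * hch
      _ ≤ n.choose k * ((k + 1) * (P a b ^ (M + 1)).coeff (d + 2)) := by gcongr
      _ = (k + 1) * (n.choose k * (P a b ^ (M + 1)).coeff (d + 2)) := by ring
  · omega
  · rw [mul_zero]
    exact mul_nonneg (Nat.cast_nonneg _) (hc _ _)
  · rw [mul_zero, mul_zero]

lemma coeff_sub_X_sq_pow {R : Type*} [CommRing R] (q : R[X]) (n m : ℕ) :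
    ((q - X ^ 2) ^ n).coeff m =
      ∑ k ∈ range (n + 1), (-1 : R) ^ k * (n.choose k * (X ^ (2 * k) * q ^ (n - k)).coeff m) := by
  rw [sub_eq_neg_add, add_pow, finsetSum_coeff]
  refine sum_congr rfl fun k _ => ?_
  rw [show (-X ^ 2 : R[X]) ^ k * q ^ (n - k) * (n.choose k : R[X]) =
      C ((-1 : R) ^ k * n.choose k) * (X ^ (2 * k) * q ^ (n - k)) by
    rw [neg_pow, ← pow_mul, map_mul, map_pow, map_neg, map_one, map_natCast]; ring]
  rw [coeff_C_mul, mul_assoc]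

lemma sum_range_add_two_alternating {R : Type*} [Ring R] (f : ℕ → R) (N : ℕ) :
    ∑ k ∈ range (N + 2), (-1) ^ k * f k =
      ∑ k ∈ range N, (-1) ^ k * f k + (-1) ^ N * (f N - f (N + 1)) := by
  rw [sum_range_succ, sum_range_succ, pow_succ]
  noncomm_ring

theorem alternating_sum_nonneg {R : Type*} [Ring R] [PartialOrder R] [IsOrderedRing R]
    {N : ℕ} {f : ℕ → R} (hf : ∀ k, k + 1 < N → f (k + 1) ≤ f k) (h0 : ∀ k < N, 0 ≤ f k) :
    0 ≤ ∑ k ∈ range N, (-1) ^ k * f k := by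
  have heven (s : ℕ) (hs : 2 * s ≤ N) : 0 ≤ ∑ k ∈ range (2 * s), (-1) ^ k * f k := by
    induction s with
    | zero => simp
    | succ s ih =>
      rw [mul_add_one, sum_range_add_two_alternating, pow_mul, neg_one_sq, one_pow, one_mul]
      exact add_nonneg (ih (by omega)) (sub_nonneg.mpr (hf _ (by omega)))
  obtain ⟨s, rfl | rfl⟩ := Nat.even_or_odd' N
  · exact heven s le_rfl
  · rw [sum_range_succ, pow_mul, neg_one_sq, one_pow, one_mul]
    exact add_nonneg (heven s (by omega)) (h0 _ (by omega))

lemma coeff_P_sq_four : (P a b ^ 2).coeff 4 = 2 * a ^ 2 + 2 * a * b := by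
  rw [show P a b ^ 2 = P a b ^ (1 + 1) from rfl]
  simp [coeff_P_pow_succ, coeff_X_pow_mul']
  ring

lemma coeff_P_cube_six : (P a b ^ 3).coeff 6 = 3 * a ^ 3 + 3 * a * b ^ 2 := by
  rw [show P a b ^ 3 = P a b ^ (0 + 1 + 1 + 1) from rfl]
  simp [coeff_P_pow_succ, coeff_X_pow_mul']
  ring

lemma choose_two_mul_add_one_le (hn : 3 ≤ n) (hna : n ≤ a) (hnb : n ≤ b) :
    (n.choose 2 : ℤ) * (P a b ^ 2).coeff 4 + 1 ≤ n.choose 3 * (P a b ^ 3).coeff 6 := by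
  rw [coeff_P_sq_four, coeff_P_cube_six]
  have hch : (n.choose 3 : ℤ) * 3 = n.choose 2 * (n - 2) := by
    rw [show (n : ℤ) - 2 = ((n - 2 : ℕ) : ℤ) by omega]
    exact_mod_cast Nat.choose_succ_right_eq n 2
  have h2 : (1 : ℤ) ≤ n.choose 2 := by exact_mod_cast Nat.choose_pos (by omega)
  have h3 : (3 : ℤ) ≤ n := by exact_mod_cast hn
  have ha : (3 : ℤ) ≤ a := by linarith
  have hb : (3 : ℤ) ≤ b := by linarith
  have hgap : 2 * a ^ 2 + 2 * a * b + 1 ≤ a ^ 3 + a * b ^ 2 := by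
    nlinarith [mul_nonneg (sub_nonneg.mpr ha) (sq_nonneg a),
      mul_nonneg (mul_nonneg (by linarith : (0 : ℤ) ≤ a) (by linarith : (0 : ℤ) ≤ b))
        (by linarith : (0 : ℤ) ≤ b - 2)]
  have hpos : (0 : ℤ) ≤ a ^ 3 + a * b ^ 2 := by positivity
  calc (n.choose 2 : ℤ) * (2 * a ^ 2 + 2 * a * b) + 1
      ≤ n.choose 2 * (2 * a ^ 2 + 2 * a * b + 1) := by linarith
    _ ≤ n.choose 2 * (a ^ 3 + a * b ^ 2) := by gcongr
    _ ≤ n.choose 2 * (n - 2) * (a ^ 3 + a * b ^ 2) := by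
      rw [mul_assoc]; gcongr; exact le_mul_of_one_le_left hpos (by linarith)
    _ = n.choose 3 * (3 * a ^ 3 + 3 * a * b ^ 2) := by linear_combination -(a ^ 3 + a * b ^ 2) * hch

theorem coeff_P_sub_X_sq_pow_nonneg (hn : 2 ≤ n) (hna : n ≤ a) (hnb : n ≤ b)
    (hsq : n * n * b ≤ a ^ 2) (h2a : 2 * a ≤ (n - 1) * b ^ 2) (m : ℕ) :
    0 ≤ ((P a b - X ^ 2) ^ n).coeff m := by
  have ha : 0 ≤ a := le_trans (Nat.cast_nonneg n) hna
  have hb : 0 ≤ b := le_trans (Nat.cast_nonneg n) hnb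
  have hc := coeff_pow_nonneg (coeff_P_nonneg ha hb)
  set t : ℕ → ℤ := fun k => n.choose k * (X ^ (2 * k) * P a b ^ (n - k)).coeff m
  have ht_nonneg (k : ℕ) : 0 ≤ t k := by
    have hX : ∀ i, 0 ≤ (X ^ (2 * k) : ℤ[X]).coeff i := fun i => by
      rw [coeff_X_pow]; split_ifs <;> simp
    exact mul_nonneg (Nat.cast_nonneg _) (coeff_mul_nonneg hX (hc _) m)
  have ht_anti (k : ℕ) (hk : k + 1 ≤ n) (hkm : k + 1 ≠ n ∨ m ≠ 2 * n) : t (k + 1) ≤ t k :=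
    choose_mul_coeff_le ha hb hna hnb hsq h2a hk hkm
  rw [coeff_sub_X_sq_pow]
  change 0 ≤ ∑ k ∈ range (n + 1), (-1) ^ k * t k
  by_cases hm : m = 2 * n
  swap
  · exact alternating_sum_nonneg (fun k hk => ht_anti k (by omega) (Or.inr hm)) fun k _ => ht_nonneg k
  -- For `m = 2n` monotonicity fails only at the last step, `t (n - 1) = 0 < t n = 1`; for odd `n`
  -- the pair `t (n - 3) - t (n - 2) ≥ 1` compensates.
  have hval (j : ℕ) (hj : j ≤ n) : t (n - j) = n.choose j * (P a b ^ j).coeff (2 * j) := by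
    simp only [t]
    rw [Nat.choose_symm hj, coeff_X_pow_mul', if_pos (by omega), show n - (n - j) = j by omega,
      show m - 2 * (n - j) = 2 * j by omega]
  have ht_last : t n = 1 := by simpa using hval 0 (by omega)
  have ht_pen : t (n - 1) = 0 := by simpa using hval 1 (by omega)
  obtain ⟨s, hs | hs⟩ := Nat.even_or_odd' n
  · obtain ⟨r, rfl⟩ : ∃ r, s = r + 1 := Nat.exists_eq_succ_of_ne_zero (by omega)
    rw [show n + 1 = n - 1 + 2 by omega, sum_range_add_two_alternating,
      show n - 1 + 1 = n by omega, ht_last, ht_pen, (show Odd (n - 1) from ⟨r, by omega⟩).neg_one_pow]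
    have := alternating_sum_nonneg (N := n - 1) (f := t)
      (fun k hk => ht_anti k (by omega) (Or.inl (by omega))) fun k _ => ht_nonneg k
    linarith
  · obtain ⟨r, rfl⟩ : ∃ r, s = r + 1 := Nat.exists_eq_succ_of_ne_zero (by omega)
    rw [show n + 1 = n - 3 + 2 + 2 by omega, sum_range_add_two_alternating,
      sum_range_add_two_alternating, show n - 3 + 2 = n - 1 by omega, show n - 1 + 1 = n by omega,
      show n - 3 + 1 = n - 2 by omega, ht_last, ht_pen, hval 2 (by omega), hval 3 (by omega),
      (show Even (n - 3) from ⟨r, by omega⟩).neg_one_pow, (show Even (n - 1) from ⟨r + 1, by omega⟩).neg_one_pow]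
    have := alternating_sum_nonneg (N := n - 3) (f := t)
      (fun k hk => ht_anti k (by omega) (Or.inl (by omega))) fun k _ => ht_nonneg k
    have := choose_two_mul_add_one_le (a := a) (b := b) (by omega) hna hnb
    simp only [Nat.reduceMul]
    linarith

theorem coeff_two_P_sub_X_sq_pow_neg (ha : 0 < a) {K : ℕ} (hK : 1 ≤ K)
    (h : (K - 1) * b ^ 2 < 2 * a) : ((P a b - X ^ 2) ^ K).coeff 2 < 0 := by
  obtain ⟨L, rfl⟩ : ∃ L, K = L + 1 := ⟨K - 1, by omega⟩
  have hcoeff : ((P a b - X ^ 2) ^ (L + 1)).coeff 2 = (P a b ^ (L + 1)).coeff 2 - (L + 1) * a ^ L := by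
    rw [coeff_sub_X_sq_pow, sum_range_succ', sum_range_succ',
      sum_eq_zero fun k _ => by rw [coeff_X_pow_mul', if_neg (by omega), mul_zero, mul_zero]]
    simp [coeff_X_pow_mul', coeff_P_pow_zero]
    ring
  rw [hcoeff]
  rcases L with _ | L
  · simp
  · have h2 : 2 * (P a b ^ (L + 1 + 1)).coeff 2 = _ := two_mul_coeff_P_pow_two L
    push_cast at h ⊢
    have hfactor : 2 * ((P a b ^ (L + 1 + 1)).coeff 2 - (L + 1 + 1) * a ^ (L + 1)) =
        ((L : ℤ) + 2) * a ^ L * ((L + 1) * b ^ 2 - 2 * a) := by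
      rw [mul_sub, h2]; ring
    have : ((L : ℤ) + 2) * a ^ L * ((L + 1) * b ^ 2 - 2 * a) < 0 :=
      mul_neg_of_pos_of_neg (by positivity) (by linarith)
    linarith

lemma coeff_one_add_X_mul_P_sub_X_sq_nonneg (ha : 1 ≤ a) (hb : 1 ≤ b) (j : ℕ) :
    0 ≤ ((1 + X) * (P a b - X ^ 2)).coeff j := by
  have : (1 + X) * (P a b - X ^ 2) = C a * X ^ 0 + C (a + b) * X ^ 1 + C (b - 1) * X ^ 2 +
      C (a - 1) * X ^ 3 + C (2 * a) * X ^ 4 + C a * X ^ 5 := by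
    simp only [P, map_add, map_sub, map_mul, map_one, map_ofNat]
    ring
  rw [this]
  simp only [coeff_add, coeff_C_mul, coeff_X_pow]
  split_ifs <;> omega

lemma bounds_of_sub_one_mul_sq_le (hn : 2 ≤ n) (hnb : n ≤ b) (hb : 5 ≤ b)
    (ha : (n - 1) * b ^ 2 ≤ 2 * a + 1) :
    n ≤ a ∧ n * n * b ≤ a ^ 2 ∧ (n - 2) * b ^ 2 < 2 * a := by
  have hn' : (2 : ℤ) ≤ n := by exact_mod_cast hn
  have ha' : b ^ 2 - 1 ≤ 2 * a := by nlinarith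
  have hsq : (b ^ 2 - 1) ^ 2 ≤ (2 * a) ^ 2 := pow_le_pow_left₀ (by nlinarith) ha' 2
  have hb3 : b ^ 3 ≤ a ^ 2 := by
    nlinarith [mul_nonneg (sq_nonneg b) (by nlinarith : (0 : ℤ) ≤ b ^ 2 - 4 * b - 2)]
  refine ⟨by nlinarith, ?_, by nlinarith⟩
  calc (n : ℤ) * n * b ≤ b * b * b := by gcongr
    _ = b ^ 3 := by ring
    _ ≤ a ^ 2 := hb3

end Negativity

open Negativity in
theorem every_negativity_is_attained (n : ℕ) (hn : 2 ≤ n) :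
    let a₁ : ℤ := 5 ^ n
    let a₀ : ℤ := ((n : ℤ) - 1) * 5 ^ (2 * n) / 2
    let p : Polynomial ℤ :=
      C a₀ + C a₁ * X - X ^ 2 + C a₀ * X ^ 3 + C a₀ * X ^ 4
    (∀ k : ℕ, 1 ≤ k → k < n → ∃ j, (p ^ k).coeff j < 0) ∧
      (∀ j, 0 ≤ (p ^ n).coeff j) ∧
      (∀ j, 0 ≤ ((1 + X) * p).coeff j) := by
  intro a₁ a₀ p
  have hp : p = P a₀ a₁ - X ^ 2 := by simp only [p, P]; ring
  have hb5 : (5 : ℤ) ≤ a₁ := le_self_pow₀ (by norm_num) (by omega)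
  have hnb : (n : ℤ) ≤ a₁ := by
    simp only [a₁]; exact_mod_cast (Nat.lt_pow_self (by norm_num : 1 < 5)).le
  have ha₀ : 2 * a₀ ≤ (n - 1) * a₁ ^ 2 ∧ (n - 1) * a₁ ^ 2 ≤ 2 * a₀ + 1 := by
    simp only [a₀, a₁, ← pow_mul, mul_comm n 2]
    omega
  obtain ⟨hna, hsq, hneg⟩ := bounds_of_sub_one_mul_sq_le hn hnb hb5 ha₀.2
  have hn' : (2 : ℤ) ≤ n := by exact_mod_cast hn
  rw [hp]
  refine ⟨fun k hk hkn => ⟨2, coeff_two_P_sub_X_sq_pow_neg (by linarith) hk ?_⟩,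
    coeff_P_sub_X_sq_pow_nonneg hn hna hnb hsq ha₀.1,
    coeff_one_add_X_mul_P_sub_X_sq_nonneg (by linarith) (by linarith)⟩
  have : (k : ℤ) - 1 ≤ n - 2 := by omega
  nlinarith
end

section
/- For p(x) = a₀ + a₁x + a₂x² + a₃x³ + a₄x⁴ ∈ ℤ[x], the coefficient of x² in p(x)ᵏ equals k·a₀^{k−2}·(a₀a₂ + ((k−1)/2)·a₁²), i.e., k·a₀^{k-1}·a₂ + (k choose 2)·a₁²·a₀^{k−2}. Consequently, if (n−2)/2 · a₁² < −a₀a₂ ≤ (n−1)/2 · a₁² with a₀ > 0, the coefficient of x² in pᵏ is negative exactly when k < n. -/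
open Polynomial

lemma qcp_coeff_int (a : ℤ) (n : ℕ) : ((a : ℤ[X])).coeff n = if n = 0 then a else 0 := by
  rw [← C_eq_intCast, coeff_C]; split <;> simp

lemma qcp_mul_coeff_zero (f g : ℤ[X]) : (f*g).coeff 0 = f.coeff 0 * g.coeff 0 := by
  simp [coeff_mul]

lemma qcp_mul_coeff_one (f g : ℤ[X]) :
    (f*g).coeff 1 = f.coeff 0 * g.coeff 1 + f.coeff 1 * g.coeff 0 := by
  rw [coeff_mul, Finset.Nat.sum_antidiagonal_eq_sum_range_succ_mk]
  simp [Finset.sum_range_succ]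

lemma qcp_mul_coeff_two (f g : ℤ[X]) :
    (f*g).coeff 2 = f.coeff 0 * g.coeff 2 + f.coeff 1 * g.coeff 1 + f.coeff 2 * g.coeff 0 := by
  rw [coeff_mul, Finset.Nat.sum_antidiagonal_eq_sum_range_succ_mk]
  simp [Finset.sum_range_succ]

lemma qcp_choose_two (m : ℕ) : (2:ℤ) * ((m+2).choose 2 : ℤ) = ((m:ℤ)+2) * ((m:ℤ)+1) := by
  have h2d : 2 ∣ (m+2) * (m+1) := by
    rcases Nat.even_or_odd m with ⟨t, rfl⟩ | ⟨t, rfl⟩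
    · exact ⟨(t+1)*(2*t+1), by ring⟩
    · exact ⟨(2*t+3)*(t+1), by ring⟩
  have h : (m+2).choose 2 = (m+2) * (m+1) / 2 := by
    rw [Nat.choose_two_right, show m+2-1 = m+1 from rfl]
  have h2 : 2 * ((m+2).choose 2) = (m+2) * (m+1) := by
    rw [h, Nat.mul_div_cancel' h2d]
  exact_mod_cast congrArg (Nat.cast : ℕ → ℤ) h2

lemma qcp_main (a₀ a₁ a₂ a₃ a₄ : ℤ) (m : ℕ) :
    let p : Polynomial ℤ :=
      C a₀ + C a₁ * X + C a₂ * X ^ 2 + C a₃ * X ^ 3 + C a₄ * X ^ 4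
    (p ^ (m+2)).coeff 0 = a₀ ^ (m+2) ∧
    (p ^ (m+2)).coeff 1 = ((m:ℤ)+2) * a₀ ^ (m+1) * a₁ ∧
    (p ^ (m+2)).coeff 2 = ((m:ℤ)+2) * a₀ ^ (m+1) * a₂ +
      ((m+2).choose 2 : ℤ) * a₁ ^ 2 * a₀ ^ m := by
  intro p
  have hp0 : p.coeff 0 = a₀ := by simp [p, coeff_X, qcp_coeff_int]
  have hp1 : p.coeff 1 = a₁ := by simp [p, coeff_X, qcp_coeff_int]
  have hp2 : p.coeff 2 = a₂ := by simp [p, coeff_X, qcp_coeff_int]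
  induction m with
  | zero =>
    have h : p ^ 2 = p * p := sq p
    rw [h, qcp_mul_coeff_zero, qcp_mul_coeff_one, qcp_mul_coeff_two, hp0, hp1, hp2]
    norm_num
    refine ⟨by ring, by ring, by ring⟩
  | succ m ih =>
    obtain ⟨ih0, ih1, ih2⟩ := ih
    have hpow : p ^ (m + 1 + 2) = p ^ (m + 2) * p := by ring
    have hch : ((m+1+2).choose 2 : ℤ) = ((m+2).choose 2 : ℤ) + ((m:ℤ)+2) := by
      have h : (m+3).choose 2 = (m+2).choose 1 + (m+2).choose 2 := Nat.choose_succ_succ (m+2) 1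
      have : (m+1+2) = (m+3) := rfl
      rw [this, h]; push_cast [Nat.choose_one_right]; ring
    refine ⟨?_, ?_, ?_⟩
    · rw [hpow, qcp_mul_coeff_zero, ih0, hp0]; ring
    · rw [hpow, qcp_mul_coeff_one, ih0, ih1, hp0, hp1]; push_cast; ring
    · rw [hpow, qcp_mul_coeff_two, ih0, ih1, ih2, hp0, hp1, hp2, hch]; push_cast; ring

theorem quadratic_coeff_of_power (a₀ a₁ a₂ a₃ a₄ : ℤ) :
    let p : Polynomial ℤ :=
      C a₀ + C a₁ * X + C a₂ * X ^ 2 + C a₃ * X ^ 3 + C a₄ * X ^ 4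
    (∀ k : ℕ, 1 ≤ k →
        (p ^ k).coeff 2 =
          (k : ℤ) * a₀ ^ (k - 1) * a₂ + (k.choose 2 : ℤ) * a₁ ^ 2 * a₀ ^ (k - 2)) ∧
      (∀ n : ℕ, 2 ≤ n → 0 < a₀ →
        ((n : ℤ) - 2) * a₁ ^ 2 < -(2 * a₀ * a₂) →
        -(2 * a₀ * a₂) ≤ ((n : ℤ) - 1) * a₁ ^ 2 →
        ∀ k : ℕ, 1 ≤ k → ((p ^ k).coeff 2 < 0 ↔ k < n)) := by
  intro p
  have hp2 : p.coeff 2 = a₂ := by simp [p, coeff_X, qcp_coeff_int]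
  have hformula : ∀ k : ℕ, 1 ≤ k →
      (p ^ k).coeff 2 =
        (k : ℤ) * a₀ ^ (k - 1) * a₂ + (k.choose 2 : ℤ) * a₁ ^ 2 * a₀ ^ (k - 2) := by
    intro k hk
    match k, hk with
    | 1, _ => simpa using hp2
    | (m+2), _ =>
      have h := (qcp_main a₀ a₁ a₂ a₃ a₄ m).2.2
      have e1 : m + 2 - 1 = m + 1 := rfl
      have e2 : m + 2 - 2 = m := rfl
      rw [e1, e2, h]; push_cast; ring
  refine ⟨hformula, ?_⟩
  intro n hn ha₀ h1 h2 k hk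
  have hsq : (0:ℤ) ≤ a₁ ^ 2 := sq_nonneg a₁
  have hn' : (2:ℤ) ≤ (n:ℤ) := by exact_mod_cast hn
  rw [hformula k hk]
  match k, hk with
  | 1, _ =>
    simp only [Nat.cast_one, pow_zero, one_mul, Nat.choose_self]
    norm_num
    constructor
    · intro _; omega
    · intro _; nlinarith
  | (m+2), _ =>
    have e1 : m + 2 - 1 = m + 1 := rfl
    have e2 : m + 2 - 2 = m := rfl
    rw [e1, e2]
    have hpos : (0:ℤ) < a₀ ^ m := pow_pos ha₀ m
    have hch : (2:ℤ) * ((m+2).choose 2 : ℤ) = ((m:ℤ)+2) * ((m:ℤ)+1) := qcp_choose_two m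
    have hch2 : (2:ℤ) * ((m+2).choose 2 : ℤ) * (a₁^2 * a₀^m)
        = ((m:ℤ)+2) * ((m:ℤ)+1) * (a₁^2 * a₀^m) := by rw [hch]
    have hps : a₀ ^ (m+1) = a₀ ^ m * a₀ := pow_succ a₀ m
    have hcast : ((m+2 : ℕ) : ℤ) = (m:ℤ) + 2 := by push_cast; ring
    rw [hcast, hps]
    constructor
    · intro hneg
      by_contra hkn
      push_neg at hkn
      have hkn' : (n:ℤ) ≤ (m:ℤ) + 2 := by exact_mod_cast hkn
      have hA : 0 ≤ (((m:ℤ)+2) - (n:ℤ)) * a₁^2 := mul_nonneg (by linarith) hsq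
      have hB : 0 ≤ 2*a₀*a₂ + ((m:ℤ)+1)*a₁^2 := by nlinarith
      have hC : 0 ≤ a₀^m * (((m:ℤ)+2) * (2*a₀*a₂ + ((m:ℤ)+1)*a₁^2)) :=
        mul_nonneg hpos.le (mul_nonneg (by linarith [Int.natCast_nonneg m]) hB)
      linarith [hneg, hC, hch2]
    · intro hkn
      have hkn' : (m:ℤ) + 3 ≤ (n:ℤ) := by exact_mod_cast hkn
      have hA : 0 ≤ ((n:ℤ) - 2 - ((m:ℤ)+1)) * a₁^2 := mul_nonneg (by linarith) hsq
      have hB : 2*a₀*a₂ + ((m:ℤ)+1)*a₁^2 < 0 := by nlinarith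
      have hC : a₀^m * (((m:ℤ)+2) * (2*a₀*a₂ + ((m:ℤ)+1)*a₁^2)) < 0 :=
        mul_neg_of_pos_of_neg hpos (mul_neg_of_pos_of_neg (by linarith [Int.natCast_nonneg m]) hB)
      linarith [hC, hch2]
end

section
/- Let a = (0.4, 0.4, 0.1, 0.1) and b = (0.5, 0.29, 0.21, 0) be probability vectors. Then a ⊗ a is majorized by b ⊗ b and a ⊗ b is majorized by b ⊗ a, but a ⊗ a is not majorized by b ⊗ a and a ⊗ b is not majorized by b ⊗ b. -/
/-- Sum of the `k` largest entries of a finite multiset of reals. -/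
noncomputable def topSum (k : ℕ) (A : Multiset ℝ) : ℝ :=
  (((A.sort (· ≤ ·)).reverse.take k).sum)

/-- `A` is majorized by `B`: every partial sum of the largest entries of `A`
is at most the corresponding one of `B`. -/
def Majorized (A B : Multiset ℝ) : Prop := ∀ k : ℕ, topSum k A ≤ topSum k B

/-- Pairwise product (tensor product) of multisets of reals. -/
def pProd (A B : Multiset ℝ) : Multiset ℝ :=
  (A.product B).map fun p => p.1 * p.2

/-!
All entries of `a ⊗ a`, `a ⊗ b`, `b ⊗ a`, `b ⊗ b` are integers divided by `10⁴`, so every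
partial sum of largest entries is an exact natural-number computation. Since `a ⊗ b` and
`b ⊗ a` are the same multiset, they majorize each other. The remaining three claims are
finite checks; the two failures are witnessed by the four largest entries
(`0.64 > 0.632` for `a ⊗ a` against `b ⊗ a`) and the two largest (`0.4 > 0.395` for `a ⊗ b`
against `b ⊗ b`).
-/

-- `insertionSort` reduces under `decide`; the well-founded `mergeSort` of `Multiset.sort` does not.
def natTopSum (k : ℕ) (l : List ℕ) : ℕ :=
  ((l.insertionSort (· ≤ ·)).reverse.take k).sum

noncomputable def natScaled (c : ℝ) (l : List ℕ) : Multiset ℝ :=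
  ((l.map fun n : ℕ => (n : ℝ) / c : List ℝ) : Multiset ℝ)

theorem pProd_comm (A B : Multiset ℝ) : pProd A B = pProd B A := by
  change (A ×ˢ B).map _ = (B ×ˢ A).map _
  rw [← Multiset.map_swap_product A B, Multiset.map_map]
  exact Multiset.map_congr rfl fun p _ => mul_comm _ _

theorem pProd_natScaled (c d : ℝ) (l m : List ℕ) :
    pProd (natScaled c l) (natScaled d m) =
      natScaled (c * d) ((l ×ˢ m).map fun p => p.1 * p.2) := by
  simp only [pProd, natScaled, ← Multiset.map_coe, ← Multiset.coe_product]
  simp only [SProd.sprod, Multiset.product, Multiset.map_bind, Multiset.bind_map, Multiset.map_map]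
  refine Multiset.bind_congr fun a _ => Multiset.map_congr rfl fun b _ => ?_
  simp only [Function.comp_apply, Nat.cast_mul]
  ring

theorem topSum_natScaled {c : ℝ} (hc : 0 < c) (k : ℕ) (l : List ℕ) :
    topSum k (natScaled c l) = natTopSum k l / c := by
  have hmono : ∀ m n : ℕ, m ≤ n ↔ (m : ℝ) / c ≤ n / c := fun m n => by
    rw [div_le_div_iff_of_pos_right hc, Nat.cast_le]
  rw [topSum, natScaled, Multiset.coe_sort,
    ← List.map_mergeSort (r := fun m n => decide (m ≤ n)) (by simp [hmono]),
    List.mergeSort_eq_insertionSort, ← List.map_reverse, ← List.map_take, natTopSum,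
    Nat.cast_list_sum]
  simp only [div_eq_mul_inv, List.sum_map_mul_right]

theorem majorized_natScaled_iff {c : ℝ} (hc : 0 < c) (l m : List ℕ) :
    Majorized (natScaled c l) (natScaled c m) ↔ ∀ k, natTopSum k l ≤ natTopSum k m := by
  simp only [Majorized, topSum_natScaled hc, div_le_div_iff_of_pos_right hc, Nat.cast_le]

theorem natTopSum_of_length_le {k : ℕ} {l : List ℕ} (hk : l.length ≤ k) :
    natTopSum k l = natTopSum l.length l := by
  rw [natTopSum, natTopSum, List.take_of_length_le, List.take_of_length_le] <;>
    simp [List.length_insertionSort, hk]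

theorem forall_natTopSum_le_of_forall_le {n : ℕ} {l m : List ℕ} (hl : l.length ≤ n)
    (hm : m.length ≤ n) (h : ∀ k ≤ n, natTopSum k l ≤ natTopSum k m) :
    ∀ k, natTopSum k l ≤ natTopSum k m := by
  intro k
  rcases le_total k n with hkn | hnk
  · exact h k hkn
  · rw [natTopSum_of_length_le (hl.trans hnk), natTopSum_of_length_le (hm.trans hnk),
      ← natTopSum_of_length_le hl, ← natTopSum_of_length_le hm]
    exact h n le_rfl

theorem locc_flexible_advantage :
    let a : Multiset ℝ := {0.4, 0.4, 0.1, 0.1}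
    let b : Multiset ℝ := {0.5, 0.29, 0.21, 0}
    Majorized (pProd a a) (pProd b b) ∧
      Majorized (pProd a b) (pProd b a) ∧
      ¬ Majorized (pProd a a) (pProd b a) ∧
      ¬ Majorized (pProd a b) (pProd b b) := by
  intro a b
  have ha : a = natScaled 100 [40, 40, 10, 10] := by norm_num [a, natScaled, ← Multiset.cons_coe]
  have hb : b = natScaled 100 [50, 29, 21, 0] := by norm_num [b, natScaled, ← Multiset.cons_coe]
  rw [pProd_comm b a, ha, hb]
  simp only [pProd_natScaled, majorized_natScaled_iff (by norm_num : (0 : ℝ) < 100 * 100)]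
  refine ⟨forall_natTopSum_le_of_forall_le (n := 16) (by decide) (by decide) (by decide),
    fun _ => le_rfl, fun h => absurd (h 4) (by decide), fun h => absurd (h 2) (by decide)⟩
end

section
/- Let p_a = (1,1,√2,√8)/√12, p_b = (1,1,√2)/2, p_c = (1,1,1,1,2,√8)/4, p_d = (1,√2)/√3. Then p_a ⊗ p_b and p_c ⊗ p_d are equal as multisets (up to reordering), yet none of p_a, p_b, p_c, p_d is (up to reordering) a tensor product of two vectors each of length at least 2 with more than one distinct value pattern, i.e., each is irreducible under tensor factorization, and they are pairwise not equal up to reordering. -/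
/-- A multiset of reals (of Schmidt coefficients) is irreducible if it is not
(up to reordering, i.e. as a multiset) a tensor product of two multisets, each of
size at least 2 and each containing at least two distinct entries. -/
def Irreducible' (A : Multiset ℝ) : Prop :=
  ¬ ∃ U V : Multiset ℝ, 2 ≤ Multiset.card U ∧ 2 ≤ Multiset.card V ∧
      (∃ x ∈ U, ∃ y ∈ U, x ≠ y) ∧ (∃ x ∈ V, ∃ y ∈ V, x ≠ y) ∧ A = pProd U V

lemma pProd_card (U V : Multiset ℝ) :
    Multiset.card (pProd U V) = Multiset.card U * Multiset.card V := by
  simp [pProd, Multiset.product]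

lemma pProd_comm_s15 (U V : Multiset ℝ) : pProd U V = pProd V U := by
  have h : ∀ (A B : Multiset ℝ), pProd A B = A.bind fun a => B.bind fun b => {a * b} := by
    intro A B
    simp only [pProd, Multiset.product, Multiset.map_bind, Multiset.map_map]
    simp [Multiset.bind_singleton, Function.comp]
  rw [h, h, Multiset.bind_bind]
  simp [mul_comm]

lemma pProd_22 (x y z w : ℝ) : pProd {x,y} {z,w} = {x*z, x*w, y*z, y*w} := by
  simp [pProd, Multiset.product]
  simp only [Multiset.insert_eq_cons, ← Multiset.singleton_add, ← add_assoc]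
  ac_rfl

lemma pProd_23 (x y z w v : ℝ) : pProd {x,y} {z,w,v} = {x*z, x*w, x*v, y*z, y*w, y*v} := by
  simp [pProd, Multiset.product]
  simp only [Multiset.insert_eq_cons, ← Multiset.singleton_add, ← add_assoc]
  ac_rfl

lemma pProd_43 (a1 a2 a3 a4 b1 b2 b3 : ℝ) : pProd {a1,a2,a3,a4} {b1,b2,b3} =
    {a1*b1, a1*b2, a1*b3, a2*b1, a2*b2, a2*b3, a3*b1, a3*b2, a3*b3, a4*b1, a4*b2, a4*b3} := by
  simp [pProd, Multiset.product]
  simp only [Multiset.insert_eq_cons, ← Multiset.singleton_add, ← add_assoc]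
  ac_rfl

lemma pProd_62 (a1 a2 a3 a4 a5 a6 b1 b2 : ℝ) : pProd {a1,a2,a3,a4,a5,a6} {b1,b2} =
    {a1*b1, a1*b2, a2*b1, a2*b2, a3*b1, a3*b2, a4*b1, a4*b2, a5*b1, a5*b2, a6*b1, a6*b2} := by
  simp [pProd, Multiset.product]
  simp only [Multiset.insert_eq_cons, ← Multiset.singleton_add, ← add_assoc]
  ac_rfl

lemma pair_ne (x y : ℝ)
    (h : ∃ p ∈ ({x,y} : Multiset ℝ), ∃ q ∈ ({x,y} : Multiset ℝ), p ≠ q) : x ≠ y := by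
  rintro rfl
  obtain ⟨p, hp, q, hq, hne⟩ := h
  simp at hp hq
  exact hne (hp.trans hq.symm)

open Classical in
lemma two_of_four (a b c p q r s : ℝ) (hab : a ≠ b) (hac : a ≠ c)
    (h : ({a,a,b,c} : Multiset ℝ) = {p,q,r,s}) :
    (a = p ∧ a = q) ∨ (a = p ∧ a = r) ∨ (a = p ∧ a = s) ∨ (a = q ∧ a = r) ∨
    (a = q ∧ a = s) ∨ (a = r ∧ a = s) := by
  have hc := congrArg (Multiset.count a) h
  simp only [Multiset.insert_eq_cons, Multiset.count_cons, Multiset.count_singleton, if_true,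
    if_neg hab, if_neg hac] at hc
  split_ifs at hc <;> first | omega | tauto

open Classical in
lemma two_in_row (q r s p1 p2 p3 p4 p5 p6 : ℝ) (hqr : q ≠ r) (hqs : q ≠ s)
    (h : ({q,q,q,q,r,s} : Multiset ℝ) = {p1,p2,p3,p4,p5,p6}) :
    (q = p1 ∧ q = p2) ∨ (q = p1 ∧ q = p3) ∨ (q = p2 ∧ q = p3) ∨
    (q = p4 ∧ q = p5) ∨ (q = p4 ∧ q = p6) ∨ (q = p5 ∧ q = p6) := by
  have hc := congrArg (Multiset.count q) h
  simp only [Multiset.insert_eq_cons, Multiset.count_cons, Multiset.count_singleton, if_true,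
    if_neg hqr, if_neg hqs] at hc
  split_ifs at hc <;> first | omega | tauto

open Classical in
lemma count_two_eq (q r s t a1 a2 a3 : ℝ)
    (h : ({q,q,q,q,r,s} : Multiset ℝ) = {a1, a1, a2, t, t, a3}) :
    t = q ∨ (t = r ∧ t = s) := by
  have hc := congrArg (Multiset.count t) h
  simp only [Multiset.insert_eq_cons, Multiset.count_cons, Multiset.count_singleton,
    eq_self_iff_true, if_true] at hc
  split_ifs at hc <;> first | omega | tauto

lemma irr_of_card_lt (A : Multiset ℝ) (h4 : Multiset.card A < 4) : Irreducible' A := by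
  rintro ⟨U, V, hU, hV, -, -, h⟩
  have hc := congrArg Multiset.card h
  rw [pProd_card] at hc
  nlinarith [hc, hU, hV, h4]

lemma same_row (a x z w : ℝ) (ha : a ≠ 0) (h1 : a = x*z) (h2 : a = x*w) : z = w := by
  have hx : x ≠ 0 := by rintro rfl; rw [zero_mul] at h1; exact ha h1
  exact mul_left_cancel₀ hx (h1.symm.trans h2)

lemma same_col (a x y z : ℝ) (ha : a ≠ 0) (h1 : a = x*z) (h2 : a = y*z) : x = y := by
  have hz : z ≠ 0 := by rintro rfl; rw [mul_zero] at h1; exact ha h1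
  exact mul_right_cancel₀ hz (h1.symm.trans h2)

lemma diag_case (a b c x y z w : ℝ) (ha : a ≠ 0) (hbc : a * a ≠ b * c)
    (hp : a * (a * (b * c)) = x*z * (x*w * (y*z * (y*w))))
    (h1 : a = x*z) (h2 : a = y*w) : False := by
  apply hbc
  have hxz : x*z ≠ 0 := by rw [← h1]; exact ha
  have hyw : y*w = x*z := h2.symm.trans h1
  rw [h1, hyw] at hp
  have h3 : (x*z) * (b * c) = x*w * (y*z * (x*z)) := mul_left_cancel₀ hxz hp
  have h4 : (x*z) * (b * c) = (x*z) * (x*w * (y*z)) := by rw [h3]; ring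
  have h5 : b * c = x*w * (y*z) := mul_left_cancel₀ hxz h4
  rw [h5, h1]
  linear_combination (-(x*z)) * hyw

lemma irr4 (a b c : ℝ) (ha : a ≠ 0) (hab : a ≠ b) (hac : a ≠ c) (hbc : a*a ≠ b*c) :
    Irreducible' {a, a, b, c} := by
  rintro ⟨U, V, hU, hV, hdU, hdV, h⟩
  have hc := congrArg Multiset.card h
  rw [pProd_card] at hc
  simp only [Multiset.insert_eq_cons, Multiset.card_cons, Multiset.card_singleton] at hc
  have hcU : Multiset.card U = 2 := by nlinarith
  have hcV : Multiset.card V = 2 := by nlinarith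
  obtain ⟨x, y, rfl⟩ := Multiset.card_eq_two.mp hcU
  obtain ⟨z, w, rfl⟩ := Multiset.card_eq_two.mp hcV
  have hxy : x ≠ y := pair_ne _ _ hdU
  have hzw : z ≠ w := pair_ne _ _ hdV
  rw [pProd_22] at h
  have hp := congrArg Multiset.prod h
  simp only [Multiset.insert_eq_cons, Multiset.prod_cons, Multiset.prod_singleton] at hp
  rcases two_of_four a b c _ _ _ _ hab hac h with
    ⟨h1,h2⟩|⟨h1,h2⟩|⟨h1,h2⟩|⟨h1,h2⟩|⟨h1,h2⟩|⟨h1,h2⟩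
  · exact hzw (same_row a x z w ha h1 h2)
  · exact hxy (same_col a x y z ha h1 h2)
  · exact diag_case a b c x y z w ha hbc (hp.trans (by ring)) h1 h2
  · exact diag_case a b c x y w z ha hbc (hp.trans (by ring)) h1 h2
  · exact hxy (same_col a x y w ha h1 h2)
  · exact hzw (same_row a y z w ha h1 h2)

lemma pc_row (q r s x y z w v : ℝ) (hxy : x ≠ y) (hq : q ≠ 0) (hrs : r ≠ s)
    (h : ({q,q,q,q,r,s} : Multiset ℝ) = {x*z, x*w, x*v, y*z, y*w, y*v})
    (h1 : q = x*z) (h2 : q = x*w) : False := by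
  have hwz : z = w := same_row q x z w hq h1 h2
  subst hwz
  have hz : z ≠ 0 := by rintro rfl; rw [mul_zero] at h1; exact hq h1
  rcases count_two_eq q r s (y*z) (x*z) (x*v) (y*v) h with ht | ⟨ht1, ht2⟩
  · exact hxy (mul_right_cancel₀ hz (h1.symm.trans ht.symm))
  · exact hrs (ht1.symm.trans ht2)

lemma irr6_aux (q r s : ℝ) (hq : q ≠ 0) (hqr : q ≠ r) (hqs : q ≠ s) (hrs : r ≠ s)
    (U V : Multiset ℝ) (hcU : Multiset.card U = 2) (hcV : Multiset.card V = 3)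
    (hdU : ∃ x ∈ U, ∃ y ∈ U, x ≠ y)
    (h : ({q,q,q,q,r,s} : Multiset ℝ) = pProd U V) : False := by
  obtain ⟨x, y, rfl⟩ := Multiset.card_eq_two.mp hcU
  obtain ⟨z, w, v, rfl⟩ := Multiset.card_eq_three.mp hcV
  have hxy : x ≠ y := pair_ne _ _ hdU
  rw [pProd_23] at h
  rcases two_in_row q r s _ _ _ _ _ _ hqr hqs h with
    ⟨h1,h2⟩|⟨h1,h2⟩|⟨h1,h2⟩|⟨h1,h2⟩|⟨h1,h2⟩|⟨h1,h2⟩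
  · exact pc_row q r s x y z w v hxy hq hrs h h1 h2
  · refine pc_row q r s x y z v w hxy hq hrs (h.trans ?_) h1 h2
    simp only [Multiset.insert_eq_cons, ← Multiset.singleton_add, ← add_assoc]
    ac_rfl
  · refine pc_row q r s x y w v z hxy hq hrs (h.trans ?_) h1 h2
    simp only [Multiset.insert_eq_cons, ← Multiset.singleton_add, ← add_assoc]
    ac_rfl
  · refine pc_row q r s y x z w v hxy.symm hq hrs (h.trans ?_) h1 h2
    simp only [Multiset.insert_eq_cons, ← Multiset.singleton_add, ← add_assoc]
    ac_rfl
  · refine pc_row q r s y x z v w hxy.symm hq hrs (h.trans ?_) h1 h2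
    simp only [Multiset.insert_eq_cons, ← Multiset.singleton_add, ← add_assoc]
    ac_rfl
  · refine pc_row q r s y x w v z hxy.symm hq hrs (h.trans ?_) h1 h2
    simp only [Multiset.insert_eq_cons, ← Multiset.singleton_add, ← add_assoc]
    ac_rfl

lemma irr6 (q r s : ℝ) (hq : q ≠ 0) (hqr : q ≠ r) (hqs : q ≠ s) (hrs : r ≠ s) :
    Irreducible' {q, q, q, q, r, s} := by
  rintro ⟨U, V, hU, hV, hdU, hdV, h⟩
  have hc := congrArg Multiset.card h
  rw [pProd_card] at hc
  simp only [Multiset.insert_eq_cons, Multiset.card_cons, Multiset.card_singleton] at hc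
  have hle : Multiset.card U ≤ 3 := by nlinarith
  interval_cases hU' : Multiset.card U
  · have hcV : Multiset.card V = 3 := by omega
    exact irr6_aux q r s hq hqr hqs hrs U V hU' hcV hdU h
  · have hcV : Multiset.card V = 2 := by omega
    exact irr6_aux q r s hq hqr hqs hrs V U hcV hU' hdV (h.trans (pProd_comm_s15 U V))

lemma f2 : Real.sqrt 2 * Real.sqrt 2 = 2 := Real.mul_self_sqrt (by norm_num)
lemma f8 : Real.sqrt 8 * Real.sqrt 8 = 8 := Real.mul_self_sqrt (by norm_num)
lemma h12 : Real.sqrt 12 = 2 * Real.sqrt 3 := by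
  rw [show (12:ℝ) = 2^2*3 by norm_num, Real.sqrt_mul (by positivity), Real.sqrt_sq (by norm_num)]
lemma h8 : Real.sqrt 8 = 2 * Real.sqrt 2 := by
  rw [show (8:ℝ) = 2^2*2 by norm_num, Real.sqrt_mul (by positivity), Real.sqrt_sq (by norm_num)]

theorem no_unique_factorisation_of_bipartite_entanglement :
    let pa : Multiset ℝ :=
      {1 / Real.sqrt 12, 1 / Real.sqrt 12, Real.sqrt 2 / Real.sqrt 12, Real.sqrt 8 / Real.sqrt 12}
    let pb : Multiset ℝ := {1 / 2, 1 / 2, Real.sqrt 2 / 2}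
    let pc : Multiset ℝ := {1 / 4, 1 / 4, 1 / 4, 1 / 4, 2 / 4, Real.sqrt 8 / 4}
    let pd : Multiset ℝ := {1 / Real.sqrt 3, Real.sqrt 2 / Real.sqrt 3}
    pProd pa pb = pProd pc pd ∧
      Irreducible' pa ∧ Irreducible' pb ∧ Irreducible' pc ∧ Irreducible' pd ∧
      pa ≠ pb ∧ pa ≠ pc ∧ pa ≠ pd ∧ pb ≠ pc ∧ pb ≠ pd ∧ pc ≠ pd := by
  intro pa pb pc pd
  have h12' : Real.sqrt 12 ≠ 0 := by positivity
  have e1 : 1 / Real.sqrt 12 * (1 / 2) = 1/(4*Real.sqrt 3) := by rw [h12]; ring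
  have e2 : 1 / Real.sqrt 12 * (Real.sqrt 2 / 2) = Real.sqrt 2/(4*Real.sqrt 3) := by
    rw [h12]; ring
  have e3 : Real.sqrt 2 / Real.sqrt 12 * (1 / 2) = Real.sqrt 2/(4*Real.sqrt 3) := by
    rw [h12]; ring
  have e4 : Real.sqrt 2 / Real.sqrt 12 * (Real.sqrt 2 / 2) = 2/(4*Real.sqrt 3) := by
    rw [h12, div_mul_div_comm, f2]; ring
  have e5 : Real.sqrt 8 / Real.sqrt 12 * (1 / 2) = 2*Real.sqrt 2/(4*Real.sqrt 3) := by
    rw [h12, h8]; ring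
  have e6 : Real.sqrt 8 / Real.sqrt 12 * (Real.sqrt 2 / 2) = 4/(4*Real.sqrt 3) := by
    rw [h12, h8, div_mul_div_comm]
    rw [show 2 * Real.sqrt 2 * Real.sqrt 2 = 2 * (Real.sqrt 2 * Real.sqrt 2) from by ring, f2]
    ring
  have e7 : 1 / 4 * (1 / Real.sqrt 3) = 1/(4*Real.sqrt 3) := by ring
  have e8 : 1 / 4 * (Real.sqrt 2 / Real.sqrt 3) = Real.sqrt 2/(4*Real.sqrt 3) := by ring
  have e9 : 2 / 4 * (1 / Real.sqrt 3) = 2/(4*Real.sqrt 3) := by ring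
  have e10 : 2 / 4 * (Real.sqrt 2 / Real.sqrt 3) = 2*Real.sqrt 2/(4*Real.sqrt 3) := by ring
  have e11 : Real.sqrt 8 / 4 * (1 / Real.sqrt 3) = 2*Real.sqrt 2/(4*Real.sqrt 3) := by
    rw [h8]; ring
  have e12 : Real.sqrt 8 / 4 * (Real.sqrt 2 / Real.sqrt 3) = 4/(4*Real.sqrt 3) := by
    rw [h8, div_mul_div_comm]
    rw [show 2 * Real.sqrt 2 * Real.sqrt 2 = 2 * (Real.sqrt 2 * Real.sqrt 2) from by ring, f2]
    ring
  refine ⟨?_, ?_, ?_, ?_, ?_, ?_, ?_, ?_, ?_, ?_, ?_⟩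
  · show pProd {1 / Real.sqrt 12, 1 / Real.sqrt 12, Real.sqrt 2 / Real.sqrt 12,
        Real.sqrt 8 / Real.sqrt 12} {1 / 2, 1 / 2, Real.sqrt 2 / 2} =
      pProd {1 / 4, 1 / 4, 1 / 4, 1 / 4, 2 / 4, Real.sqrt 8 / 4}
        {1 / Real.sqrt 3, Real.sqrt 2 / Real.sqrt 3}
    rw [pProd_43, pProd_62, e1, e2, e3, e4, e5, e6, e7, e8, e9, e10, e11, e12]
    simp only [Multiset.insert_eq_cons, ← Multiset.singleton_add, ← add_assoc]
    ac_rfl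
  · refine irr4 _ _ _ ?_ ?_ ?_ ?_
    · exact (by positivity : (0:ℝ) < 1 / Real.sqrt 12).ne'
    · intro h
      field_simp at h
      have f := f2
      rw [← h] at f; norm_num at f
    · intro h
      field_simp at h
      have f := f8
      rw [← h] at f; norm_num at f
    · intro h
      field_simp at h
      rw [h8, show Real.sqrt 2 * (2*Real.sqrt 2) = 2*(Real.sqrt 2*Real.sqrt 2) from by ring,
        f2] at h
      norm_num at h
  · exact irr_of_card_lt _ (by simp [pb])
  · refine irr6 _ _ _ (by norm_num) (by norm_num) ?_ ?_
    · intro h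
      field_simp at h
      have f := f8
      rw [← h] at f; norm_num at f
    · intro h
      field_simp at h
      have f := f8
      rw [← h] at f; norm_num at f
  · exact irr_of_card_lt _ (by simp [pd])
  · intro h; have := congrArg Multiset.card h; simp [pa, pb] at this
  · intro h; have := congrArg Multiset.card h; simp [pa, pc] at this
  · intro h; have := congrArg Multiset.card h; simp [pa, pd] at this
  · intro h; have := congrArg Multiset.card h; simp [pb, pc] at this
  · intro h; have := congrArg Multiset.card h; simp [pb, pd] at this
  · intro h; have := congrArg Multiset.card h; simp [pc, pd] at this
end

section
/- Let T be a transformation theory: a commutative-up-to-equivalence setting (M,+,≤) where (M,+) is a monoid and ≤ is a translation-invariant preorder with a+b ≤ b+a for all a,b. For states A, B ∈ M and n ≥ 1, the following are equivalent: (1) there exist C₁,...,Cₙ ∈ M with C₀ := Cₙ such that A + C_{i−1} ≤ B + C_i for all 1 ≤ i ≤ n; (2) there exists C ∈ M with nA + C ≤ nB + C, where nX denotes the n-fold sum. -/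
theorem flexible_cycle_iff_multicopy_catalysis {M : Type*} [AddMonoid M]
    (le : M → M → Prop)
    (hrefl : ∀ a, le a a)
    (htrans : ∀ a b c, le a b → le b c → le a c)
    (htrans_inv : ∀ a b c, le a b → le (a + c) (b + c))
    (hswap : ∀ a b, le (a + b) (b + a))
    (A B : M) (n : ℕ) (hn : 1 ≤ n) :
    (∃ C : ℕ → M, C 0 = C n ∧
        ∀ i : ℕ, 1 ≤ i → i ≤ n → le (A + C (i - 1)) (B + C i)) ↔
      ∃ C : M, le (n • A + C) (n • B + C) := by
  have leal : ∀ a b c, le a b → le (c + a) (c + b) := fun a b c h =>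
    htrans _ _ _ (hswap c a) (htrans _ _ _ (htrans_inv _ _ c h) (hswap b c))
  have comm : ∀ a b c, le (a + (b + c)) (b + (a + c)) := by
    intro a b c
    rw [← add_assoc, ← add_assoc]
    exact htrans_inv _ _ c (hswap a b)
  constructor
  · rintro ⟨C, hC0, hstep⟩
    have key : ∀ k, k ≤ n → le (k • A + C 0) (k • B + C k) := by
      intro k
      induction k with
      | zero => intro _; simpa using hrefl (C 0)
      | succ k ih =>
        intro hk
        have ih' := ih (Nat.le_of_succ_le hk)
        have h1 : le (A + C k) (B + C (k + 1)) := by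
          have := hstep (k + 1) (by omega) hk
          simpa using this
        rw [succ_nsmul', succ_nsmul', add_assoc, add_assoc]
        exact htrans _ _ _ (leal _ _ A ih')
          (htrans _ _ _ (comm A (k • B) (C k))
            (htrans _ _ _ (leal _ _ (k • B) h1)
              (comm (k • B) B (C (k + 1)))))
    refine ⟨C 0, ?_⟩
    have h := key n le_rfl
    rwa [← hC0] at h
  · rintro ⟨C, hC⟩
    refine ⟨fun i => (i % n) • A + ((n - i % n) • B + C), ?_, ?_⟩
    · simp
    · intro i hi1 hi2
      by_cases h : i = n
      · rw [h]
        simp only [Nat.mod_self, Nat.mod_eq_of_lt (show n - 1 < n by omega),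
          Nat.sub_sub_self hn, zero_nsmul, zero_add, one_nsmul, Nat.sub_zero]
        have hA : A + (n - 1) • A = n • A := by
          rw [← succ_nsmul', Nat.sub_add_cancel hn]
        rw [← add_assoc, hA]
        exact htrans _ _ _ (comm (n • A) B C) (leal _ _ B hC)
      · have hin : i < n := by omega
        have h1 : i % n = i := Nat.mod_eq_of_lt hin
        have h2 : (i - 1) % n = i - 1 := Nat.mod_eq_of_lt (by omega)
        have h3 : n - (i - 1) = (n - i) + 1 := by omega
        simp only [h1, h2, h3]
        have hA : i • A = A + (i - 1) • A := by
          rw [← succ_nsmul', Nat.sub_add_cancel hi1]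
        rw [hA, succ_nsmul']
        -- goal: le (A + ((i-1)•A + ((B + (n-i)•B) + C))) (B + ((A + (i-1)•A) + ((n-i)•B + C)))
        rw [add_assoc A ((i-1) • A), add_assoc (B) ((n - i) • B)]
        exact htrans _ _ _ (leal _ _ A (comm ((i-1) • A) B ((n-i) • B + C)))
          (comm A B ((i-1) • A + ((n-i) • B + C)))
end

section
/- Let (M,+,≤) be a transformation theory, A, B ∈ M, and suppose for every C in some nonempty set S ⊆ M there exist C' ∈ S and D ∈ M with A + C ≤ B + D + C'. Then there exists a (possibly different) nonempty set S' ⊆ M such that for every C ∈ S' there exists C'' ∈ S' with A + C ≤ B + C''. (Flexible catalytic extraction implies flexible catalytic transformation.) -/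
theorem flexible_catalytic_extraction_implies_transformation {M : Type*} [AddMonoid M]
    (le : M → M → Prop)
    (hrefl : ∀ a, le a a)
    (htrans : ∀ a b c, le a b → le b c → le a c)
    (htrans_inv : ∀ a b c, le a b → le (a + c) (b + c))
    (hswap : ∀ a b, le (a + b) (b + a))
    (A B : M) (S : Set M) (hS : S.Nonempty)
    (hflex : ∀ C ∈ S, ∃ C' ∈ S, ∃ D : M, le (A + C) (B + (D + C'))) :
    ∃ S' : Set M, S'.Nonempty ∧
      ∀ C ∈ S', ∃ C'' ∈ S', le (A + C) (B + C'') := by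
  -- left translation invariance
  have hleft : ∀ a b c, le a b → le (c + a) (c + b) := by
    intro a b c h
    exact htrans _ _ _ (hswap c a) (htrans _ _ _ (htrans_inv _ _ _ h) (hswap b c))
  have hflex' : ∀ C : S, ∃ C' : S, ∃ D : M, le (A + C) (B + (D + C')) := by
    intro ⟨C, hC⟩
    obtain ⟨C', hC', D, h⟩ := hflex C hC
    exact ⟨⟨C', hC'⟩, D, h⟩
  choose f d hfd using hflex'
  obtain ⟨C0, hC0⟩ := hS
  set c : ℕ → S := fun n => f^[n] ⟨C0, hC0⟩ with hc
  set E : ℕ → M := fun n => Nat.rec 0 (fun k acc => acc + d (c k)) n with hE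
  refine ⟨Set.range (fun n => (c n : M) + E n), ⟨_, ⟨0, rfl⟩⟩, ?_⟩
  rintro C ⟨n, rfl⟩
  refine ⟨(c (n + 1) : M) + E (n + 1), ⟨n + 1, rfl⟩, ?_⟩
  have hcs : c (n + 1) = f (c n) := Function.iterate_succ_apply' f n _
  have h1 : le (A + (c n : M)) (B + (d (c n) + (f (c n) : M))) := hfd (c n)
  have h2 : le (A + (c n : M) + E n) (B + (d (c n) + (f (c n) : M)) + E n) :=
    htrans_inv _ _ _ h1
  have h3 : le (B + (d (c n) + ((f (c n) : M) + E n)))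
      (B + (((f (c n) : M) + E n) + d (c n))) := hleft _ _ _ (hswap _ _)
  have hEsucc : E (n + 1) = E n + d (c n) := rfl
  rw [hcs, hEsucc]
  have h2' : le (A + ((c n : M) + E n)) (B + (d (c n) + ((f (c n) : M) + E n))) := by
    simpa [add_assoc] using h2
  have h3' : le (B + (d (c n) + ((f (c n) : M) + E n)))
      (B + ((f (c n) : M) + (E n + d (c n)))) := by
    simpa [add_assoc] using h3
  exact htrans _ _ _ h2' h3'
end
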